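/- arXiv:1606.00922 — 6 statements merged into one kernel-verified Lean document; each statement's English description precedes it below -/
import Mathlib

section
/- Let V be a finite set of N vectors in {-1,0,1}^n and let ε_1,...,ε_n be independent Rademacher random variables (uniform on {-1,1}). Then for any c > 0, (1/n)·E[max_{v∈V} Σ_{i=1}^n (ε_i v_i − c|v_i|)] ≤ log(N)/(2cn). -/
open Finset
set_option maxHeartbeats 1000000

lemma offset_factor_le (c x : ℝ) (hc : 0 < c) (hx : x = -1 ∨ x = 0 ∨ x = 1) :
    Real.exp (2*c*(x - c*|x|)) + Real.exp (2*c*(-x - c*|x|)) ≤ 2 := by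
  have key : Real.exp (2*c*(1 - c*1)) + Real.exp (2*c*(-1 - c*1)) ≤ 2 := by
    have h := Real.cosh_le_exp_half_sq (2*c)
    rw [Real.cosh_eq] at h
    have e1 : Real.exp (2*c*(1 - c*1)) = Real.exp (2*c) * Real.exp (-((2*c)^2/2)) := by
      rw [← Real.exp_add]; congr 1; ring
    have e2 : Real.exp (2*c*(-1 - c*1)) = Real.exp (-(2*c)) * Real.exp (-((2*c)^2/2)) := by
      rw [← Real.exp_add]; congr 1; ring
    have hpos : (0:ℝ) < Real.exp (-((2*c)^2/2)) := Real.exp_pos _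
    calc Real.exp (2*c*(1 - c*1)) + Real.exp (2*c*(-1 - c*1))
        = (Real.exp (2*c) + Real.exp (-(2*c))) * Real.exp (-((2*c)^2/2)) := by
          rw [e1, e2]; ring
      _ ≤ (2 * Real.exp ((2*c)^2/2)) * Real.exp (-((2*c)^2/2)) := by
          apply mul_le_mul_of_nonneg_right _ hpos.le
          linarith
      _ = 2 := by rw [mul_assoc, ← Real.exp_add]; simp
  rcases hx with h | h | h
  · subst h
    simp only [abs_neg, abs_one, neg_neg]
    linarith [key]
  · subst h; norm_num
  · subst h
    simpa using key

/-- Offset Rademacher maximal inequality: for a finite set `V` of vectors with entries in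
`{-1,0,1}` and independent Rademacher signs (modeled by averaging over all sign patterns),
`(1/n) E max_{v∈V} Σᵢ (εᵢ vᵢ - c |vᵢ|) ≤ log |V| / (2 c n)`. -/
theorem offset_rademacher_max (n : ℕ) (hn : 0 < n)
    (V : Finset (Fin n → ℝ)) (hV : V.Nonempty)
    (hval : ∀ v ∈ V, ∀ i, v i = -1 ∨ v i = 0 ∨ v i = 1)
    (c : ℝ) (hc : 0 < c) :
    (1 / n) * ((2 ^ n : ℝ)⁻¹ *
        ∑ σ : Fin n → Bool, V.sup' hV fun v =>
          ∑ i, ((if σ i then (1 : ℝ) else -1) * v i - c * |v i|)) ≤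
      Real.log V.card / (2 * c * n) := by
  set F : (Fin n → Bool) → ℝ := fun σ => V.sup' hV fun v =>
    ∑ i, ((if σ i then (1 : ℝ) else -1) * v i - c * |v i|) with hF
  set M : ℝ := (2 ^ n : ℝ)⁻¹ * ∑ σ : Fin n → Bool, F σ with hM
  have hNpos : (0:ℝ) < (V.card : ℝ) := by exact_mod_cast hV.card_pos
  have hcard : (Finset.univ : Finset (Fin n → Bool)).card = 2 ^ n := by simp
  have h2n : (0:ℝ) < (2:ℝ) ^ n := by positivity
  have key : Real.exp (2*c*M) ≤ (V.card : ℝ) := by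
    have jensen : Real.exp (2*c*M) ≤
        ∑ σ : Fin n → Bool, (2 ^ n : ℝ)⁻¹ * Real.exp (2*c*F σ) := by
      have h := convexOn_exp.map_sum_le (t := (Finset.univ : Finset (Fin n → Bool)))
        (w := fun _ => (2 ^ n : ℝ)⁻¹) (p := fun σ => 2*c*F σ)
        (fun _ _ => by positivity)
        (by rw [Finset.sum_const, hcard, nsmul_eq_mul]; push_cast; field_simp)
        (fun _ _ => Set.mem_univ _)
      have e : (∑ σ : Fin n → Bool, (2 ^ n : ℝ)⁻¹ • (2*c*F σ)) = 2*c*M := by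
        simp only [smul_eq_mul, hM]
        rw [← Finset.mul_sum, ← Finset.mul_sum]
        ring
      calc Real.exp (2*c*M)
          = Real.exp (∑ σ : Fin n → Bool, (2 ^ n : ℝ)⁻¹ • (2*c*F σ)) := by rw [e]
        _ ≤ ∑ σ : Fin n → Bool, (2 ^ n : ℝ)⁻¹ • Real.exp (2*c*F σ) := h
        _ = ∑ σ : Fin n → Bool, (2 ^ n : ℝ)⁻¹ * Real.exp (2*c*F σ) := by
            simp [smul_eq_mul]
    have step2 : ∀ σ : Fin n → Bool, Real.exp (2*c*F σ) ≤
        ∑ v ∈ V, Real.exp (2*c*∑ i, ((if σ i then (1:ℝ) else -1) * v i - c * |v i|)) := by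
      intro σ
      obtain ⟨v₀, hv₀, hveq⟩ := Finset.exists_mem_eq_sup' hV
        (fun v => ∑ i, ((if σ i then (1:ℝ) else -1) * v i - c * |v i|))
      have hFeq : F σ = ∑ i, ((if σ i then (1:ℝ) else -1) * v₀ i - c * |v₀ i|) := by
        rw [hF]; exact hveq
      rw [hFeq]
      have hpos : ∀ v ∈ V,
          0 ≤ Real.exp (2*c*∑ i, ((if σ i then (1:ℝ) else -1) * v i - c * |v i|)) :=
        fun v _ => (Real.exp_pos _).le
      exact Finset.single_le_sum hpos hv₀
    have swap : ∑ σ : Fin n → Bool, ∑ v ∈ V,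
          Real.exp (2*c*∑ i, ((if σ i then (1:ℝ) else -1) * v i - c * |v i|))
        = ∑ v ∈ V, ∏ i, ∑ b : Bool,
            Real.exp (2*c*((if b then (1:ℝ) else -1) * v i - c * |v i|)) := by
      rw [Finset.sum_comm]
      refine Finset.sum_congr rfl fun v _ => ?_
      simp_rw [Finset.mul_sum, Real.exp_sum]
      have h := Fintype.prod_sum fun (i : Fin n) (b : Bool) =>
        Real.exp (2*c*((if b then (1:ℝ) else -1) * v i - c * |v i|))
      exact h.symm
    have bdd : ∀ v ∈ V, (∏ i, ∑ b : Bool,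
        Real.exp (2*c*((if b then (1:ℝ) else -1) * v i - c * |v i|))) ≤ (2:ℝ)^n := by
      intro v hv
      calc (∏ i, ∑ b : Bool,
            Real.exp (2*c*((if b then (1:ℝ) else -1) * v i - c * |v i|)))
          ≤ ∏ _i : Fin n, (2:ℝ) := by
            apply Finset.prod_le_prod
            · intro i _
              apply Finset.sum_nonneg
              intro b _
              exact (Real.exp_pos _).le
            · intro i _
              rw [Fintype.sum_bool]
              have := offset_factor_le c (v i) hc (hval v hv i)
              simpa using this
        _ = (2:ℝ)^n := by simp
    calc Real.exp (2*c*M)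
        ≤ ∑ σ : Fin n → Bool, (2 ^ n : ℝ)⁻¹ * Real.exp (2*c*F σ) := jensen
      _ ≤ ∑ σ : Fin n → Bool, (2 ^ n : ℝ)⁻¹ * ∑ v ∈ V,
            Real.exp (2*c*∑ i, ((if σ i then (1:ℝ) else -1) * v i - c * |v i|)) := by
          refine Finset.sum_le_sum fun σ _ => ?_
          exact mul_le_mul_of_nonneg_left (step2 σ) (by positivity)
      _ = (2 ^ n : ℝ)⁻¹ * ∑ v ∈ V, ∏ i, ∑ b : Bool,
            Real.exp (2*c*((if b then (1:ℝ) else -1) * v i - c * |v i|)) := by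
          rw [← Finset.mul_sum, swap]
      _ ≤ (2 ^ n : ℝ)⁻¹ * ∑ _v ∈ V, (2:ℝ)^n := by
          apply mul_le_mul_of_nonneg_left _ (by positivity)
          exact Finset.sum_le_sum bdd
      _ = (V.card : ℝ) := by
          rw [Finset.sum_const, nsmul_eq_mul]
          field_simp
  have hM_le : M ≤ Real.log (V.card : ℝ) / (2*c) := by
    have h1 : 2*c*M ≤ Real.log (V.card : ℝ) := (Real.le_log_iff_exp_le hNpos).2 key
    rw [le_div_iff₀ (by positivity)]
    linarith [h1]
  have hne : (n:ℝ) ≠ 0 := Nat.cast_ne_zero.2 hn.ne'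
  have hrw : Real.log (V.card : ℝ) / (2 * c * n)
      = (1/(n:ℝ)) * (Real.log (V.card : ℝ) / (2*c)) := by
    rw [one_div, ← div_eq_inv_mul, div_div]
  rw [hrw]
  exact mul_le_mul_of_nonneg_left hM_le (by positivity)
end

section
/- Shifted symmetrization in expectation: let G be a class of measurable functions on a probability space, Z_1,...,Z_n i.i.d. samples with empirical mean P_n and population mean P, and c ≥ 0. Then E[sup_{g∈G} (P g − (1+c) P_n g)] ≤ ((c+2)/n) · E E_ε [sup_{g∈G} Σ_{i=1}^n (ε_i g(Z_i) − (c/(c+2)) g(Z_i))], where ε_i are independent Rademacher random variables independent of the sample. -/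
/-!
Let `Z'` be an independent copy of the sample. Since `P g = E' P'ₙ g`, Jensen's inequality for the
supremum gives `E sup_g (P g - (1 + c) Pₙ g) ≤ E sup_g (P'ₙ g - (1 + c) Pₙ g)`. With
`a = c / (c + 2)` one has
`g(Z'ᵢ) - (1 + c) g(Zᵢ) = (c + 2) / 2 * ((g(Z'ᵢ) - g(Zᵢ)) - a (g(Z'ᵢ) + g(Zᵢ)))`,
and the law of the sample pairs is invariant under swapping `Zᵢ` and `Z'ᵢ`, so the differences
`g(Z'ᵢ) - g(Zᵢ)` may be multiplied by arbitrary signs `εᵢ` and averaged over them. Splitting the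
supremum into its `Z'` part and its `Z` part yields two shifted Rademacher suprema (with signs `ε`
and `-ε`) of the same expectation, which turns the factor `(c + 2) / (2n)` into `(c + 2) / n`.
-/

open MeasureTheory Finset

theorem Finset.sup'_add_le {β M : Type*} [SemilatticeSup M] [Add M] [AddLeftMono M]
    [AddRightMono M] {s : Finset β} (hs : s.Nonempty) (f h : β → M) :
    (s.sup' hs fun b => f b + h b) ≤ s.sup' hs f + s.sup' hs h :=
  sup'_le _ _ fun _ hb => add_le_add (le_sup' f hb) (le_sup' h hb)

theorem MeasureTheory.MeasurePreserving.integral_comp_of_aestronglyMeasurable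
    {α δ E : Type*} [MeasurableSpace α] [MeasurableSpace δ] [NormedAddCommGroup E]
    [NormedSpace ℝ E] {μ : Measure α} {ν : Measure δ} {f : α → δ}
    (hf : MeasurePreserving f μ ν) {g : δ → E} (hg : AEStronglyMeasurable g ν) :
    ∫ x, g (f x) ∂μ = ∫ y, g y ∂ν := by
  rw [← hf.map_eq] at hg ⊢
  exact (integral_map hf.measurable.aemeasurable hg).symm

section SupIntegral

variable {α β : Type*} [MeasurableSpace α] {μ : Measure α} {s : Finset β} {f : β → α → ℝ}

theorem MeasureTheory.Integrable.finset_sup' (hs : s.Nonempty)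
    (hf : ∀ b ∈ s, Integrable (f b) μ) : Integrable (fun x => s.sup' hs fun b => f b x) μ := by
  induction hs using Nonempty.cons_induction with
  | singleton b => simpa using hf b (mem_singleton_self b)
  | cons b s hbs hs ih =>
    simp only [sup'_cons hs]
    exact (hf b (mem_cons_self b s)).sup (ih fun x hx => hf x (mem_cons_of_mem hx))

theorem Finset.sup'_integral_le_integral_sup' (hs : s.Nonempty)
    (hf : ∀ b ∈ s, Integrable (f b) μ) :
    (s.sup' hs fun b => ∫ x, f b x ∂μ) ≤ ∫ x, s.sup' hs (fun b => f b x) ∂μ :=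
  sup'_le _ _ fun b hb =>
    integral_mono (hf b hb) (Integrable.finset_sup' hs hf) fun x => le_sup' (fun b => f b x) hb

end SupIntegral

section GhostSample

variable {ι α : Type*} [Fintype ι] [MeasurableSpace α] {μ : Measure α} [IsProbabilityMeasure μ]
  {G : Finset (α → ℝ)}

theorem integrable_sum_comp_eval {g : α → ℝ} (hg : Integrable g μ) :
    Integrable (fun z : ι → α => ∑ i, g (z i)) (Measure.pi fun _ => μ) :=
  integrable_finsetSum _ fun i _ => (measurePreserving_eval _ i).integrable_comp_of_integrable hg

theorem integral_sum_comp_eval {g : α → ℝ} (hg : Integrable g μ) :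
    ∫ z : ι → α, ∑ i, g (z i) ∂(Measure.pi fun _ => μ) = Fintype.card ι * ∫ x, g x ∂μ := by
  rw [integral_finsetSum (f := fun i (z : ι → α) => g (z i)) _ fun i _ =>
    (measurePreserving_eval _ i).integrable_comp_of_integrable hg]
  simp [(measurePreserving_eval (fun _ : ι => μ) _).integral_comp_of_aestronglyMeasurable
    hg.aestronglyMeasurable]

theorem sup'_integral_sub_le_integral_ghost [Nonempty ι] (hG : G.Nonempty)
    (hInt : ∀ g ∈ G, Integrable g μ) (b : ℝ) (z : ι → α) :
    (G.sup' hG fun g => (∫ x, g x ∂μ) - b * ((Fintype.card ι : ℝ)⁻¹ * ∑ i, g (z i))) ≤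
      ∫ z' : ι → α, G.sup' hG (fun g =>
          (Fintype.card ι : ℝ)⁻¹ * (∑ i, g (z' i) - b * ∑ i, g (z i)))
        ∂(Measure.pi fun _ => μ) := by
  refine le_of_eq_of_le (sup'_congr hG rfl fun g hg => ?_)
    (sup'_integral_le_integral_sup' hG fun g hg =>
      ((integrable_sum_comp_eval (hInt g hg)).sub (integrable_const _)).const_mul _)
  rw [integral_const_mul, integral_sub (integrable_sum_comp_eval (hInt g hg)) (integrable_const _),
    integral_sum_comp_eval (hInt g hg)]
  field_simp
  simp [mul_sum]

theorem integral_sup'_integral_sub_le_integral_ghost [Nonempty ι] (hG : G.Nonempty)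
    (hInt : ∀ g ∈ G, Integrable g μ) (b : ℝ) :
    ∫ z, (G.sup' hG fun g => (∫ x, g x ∂μ) - b * ((Fintype.card ι : ℝ)⁻¹ * ∑ i, g (z i)))
        ∂(Measure.pi fun _ : ι => μ) ≤
      ∫ w, G.sup' hG (fun g =>
          (Fintype.card ι : ℝ)⁻¹ * (∑ i, g (w i).2 - b * ∑ i, g (w i).1))
        ∂(Measure.pi fun _ : ι => μ.prod μ) := by
  set ν := Measure.pi fun _ : ι => μ
  set F : (ι → α) × (ι → α) → ℝ := fun p =>
    G.sup' hG fun g => (Fintype.card ι : ℝ)⁻¹ * (∑ i, g (p.2 i) - b * ∑ i, g (p.1 i))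
  have hF : Integrable F (ν.prod ν) := Integrable.finset_sup' hG fun g hg =>
    (((integrable_sum_comp_eval (hInt g hg)).comp_snd ν).sub
      (((integrable_sum_comp_eval (hInt g hg)).comp_fst ν).const_mul b)).const_mul _
  calc _ ≤ ∫ z, ∫ z', F (z, z') ∂ν ∂ν :=
        integral_mono
          (Integrable.finset_sup' hG fun g hg => (integrable_const _).sub
            (((integrable_sum_comp_eval (hInt g hg)).const_mul _).const_mul _))
          hF.integral_prod_left (sup'_integral_sub_le_integral_ghost hG hInt b)
    _ = ∫ p, F p ∂(ν.prod ν) := (integral_prod F hF).symm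
    _ = _ := ((measurePreserving_arrowProdEquivProdArrow α α ι _ _).integral_comp' F).symm

end GhostSample

section Rademacher

variable {ι α : Type*} [Fintype ι]

def shiftedRademacherSup (G : Finset (α → ℝ)) (hG : G.Nonempty) (a : ℝ) (σ : ι → Bool)
    (z : ι → α) : ℝ :=
  G.sup' hG fun g => ∑ i, ((if σ i then (1 : ℝ) else -1) * g (z i) - a * g (z i))

/-- `(w i).1` is the `i`-th sample point and `(w i).2` its ghost copy. -/
def ghostRademacherSup (G : Finset (α → ℝ)) (hG : G.Nonempty) (a : ℝ) (σ : ι → Bool)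
    (w : ι → α × α) : ℝ :=
  G.sup' hG fun g => ∑ i,
    ((if σ i then (1 : ℝ) else -1) * (g (w i).2 - g (w i).1) - a * (g (w i).2 + g (w i).1))

def swapUnless (σ : ι → Bool) (w : ι → α × α) : ι → α × α :=
  fun i => if σ i then w i else (w i).swap

variable {G : Finset (α → ℝ)}

theorem ghostRademacherSup_swapUnless (hG : G.Nonempty) (a : ℝ) (σ : ι → Bool)
    (w : ι → α × α) :
    ghostRademacherSup G hG a (fun _ => true) (swapUnless σ w) = ghostRademacherSup G hG a σ w :=
  sup'_congr hG rfl fun g _ => sum_congr rfl fun i _ => by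
    cases h : σ i
    · simp only [swapUnless, h, Bool.false_eq_true, if_true, if_false, Prod.fst_swap,
        Prod.snd_swap]
      ring
    · simp only [swapUnless, h, if_true]

theorem ghostRademacherSup_le (hG : G.Nonempty) (a : ℝ) (σ : ι → Bool) (w : ι → α × α) :
    ghostRademacherSup G hG a σ w ≤ shiftedRademacherSup G hG a σ (fun i => (w i).2) +
      shiftedRademacherSup G hG a (fun i => !σ i) (fun i => (w i).1) := by
  refine le_of_eq_of_le (sup'_congr hG rfl fun g _ => ?_) (sup'_add_le hG _ _)
  rw [← sum_add_distrib]
  refine sum_congr rfl fun i _ => ?_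
  cases h : σ i <;>
  · simp only [h, Bool.not_false, Bool.not_true, Bool.false_eq_true, if_true, if_false]
    ring

theorem sup'_ghost_eq_mul_ghostRademacherSup (hG : G.Nonempty) {c : ℝ} (hc : -2 < c)
    (w : ι → α × α) :
    (G.sup' hG fun g =>
        (Fintype.card ι : ℝ)⁻¹ * (∑ i, g (w i).2 - (1 + c) * ∑ i, g (w i).1)) =
      (c + 2) / (2 * Fintype.card ι) *
        ghostRademacherSup G hG (c / (c + 2)) (fun _ => true) w := by
  have hc2 : 0 < c + 2 := by linarith
  rw [ghostRademacherSup, mul₀_sup' (by positivity)]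
  refine sup'_congr hG rfl fun g _ => ?_
  simp only [if_true, one_mul, mul_sum, ← sum_sub_distrib]
  refine sum_congr rfl fun i _ => ?_
  field_simp
  ring

variable [MeasurableSpace α] {μ : Measure α} [IsProbabilityMeasure μ]

theorem measurePreserving_swapUnless (σ : ι → Bool) :
    MeasurePreserving (swapUnless σ) (Measure.pi fun _ => μ.prod μ)
      (Measure.pi fun _ => μ.prod μ) :=
  measurePreserving_pi (f := fun i (p : α × α) => if σ i then p else p.swap) _ _ fun i => by
    cases σ i
    · exact Measure.measurePreserving_swap
    · exact MeasurePreserving.id _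

theorem integrable_shiftedRademacherSup (hG : G.Nonempty) (hInt : ∀ g ∈ G, Integrable g μ)
    (a : ℝ) (σ : ι → Bool) :
    Integrable (shiftedRademacherSup G hG a σ) (Measure.pi fun _ => μ) :=
  Integrable.finset_sup' hG fun g hg => integrable_finsetSum _ fun i _ =>
    have hgi :=
      (measurePreserving_eval (fun _ : ι => μ) i).integrable_comp_of_integrable (hInt g hg)
    (hgi.const_mul _).sub (hgi.const_mul a)

theorem integrable_ghostRademacherSup (hG : G.Nonempty) (hInt : ∀ g ∈ G, Integrable g μ)
    (a : ℝ) (σ : ι → Bool) :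
    Integrable (ghostRademacherSup G hG a σ) (Measure.pi fun _ => μ.prod μ) :=
  Integrable.finset_sup' hG fun g hg => integrable_finsetSum _ fun i _ =>
    have hpi := measurePreserving_eval (fun _ : ι => μ.prod μ) i
    have hx := (measurePreserving_fst.comp hpi).integrable_comp_of_integrable (hInt g hg)
    have hy := (measurePreserving_snd.comp hpi).integrable_comp_of_integrable (hInt g hg)
    ((hy.sub hx).const_mul _).sub ((hy.add hx).const_mul a)

theorem integral_ghostRademacherSup_le_integral_add (hG : G.Nonempty)
    (hInt : ∀ g ∈ G, Integrable g μ) (a : ℝ) (σ : ι → Bool) :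
    ∫ w, ghostRademacherSup G hG a σ w ∂(Measure.pi fun _ => μ.prod μ) ≤
      (∫ z, shiftedRademacherSup G hG a σ z ∂(Measure.pi fun _ => μ)) +
        ∫ z, shiftedRademacherSup G hG a (fun i => !σ i) z ∂(Measure.pi fun _ => μ) := by
  have hA := integrable_shiftedRademacherSup (ι := ι) hG hInt a
  have hsnd : MeasurePreserving (fun (w : ι → α × α) i => (w i).2)
      (Measure.pi fun _ => μ.prod μ) (Measure.pi fun _ => μ) :=
    measurePreserving_pi _ _ fun _ => measurePreserving_snd
  have hfst : MeasurePreserving (fun (w : ι → α × α) i => (w i).1)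
      (Measure.pi fun _ => μ.prod μ) (Measure.pi fun _ => μ) :=
    measurePreserving_pi _ _ fun _ => measurePreserving_fst
  have hA₂ : Integrable (fun w => shiftedRademacherSup G hG a σ fun i => (w i).2)
      (Measure.pi fun _ => μ.prod μ) := hsnd.integrable_comp_of_integrable (hA σ)
  have hA₁ : Integrable (fun w => shiftedRademacherSup G hG a (fun i => !σ i) fun i => (w i).1)
      (Measure.pi fun _ => μ.prod μ) := hfst.integrable_comp_of_integrable (hA _)
  calc _ ≤ ∫ w, (shiftedRademacherSup G hG a σ (fun i => (w i).2) +
          shiftedRademacherSup G hG a (fun i => !σ i) (fun i => (w i).1))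
        ∂(Measure.pi fun _ => μ.prod μ) :=
        integral_mono (integrable_ghostRademacherSup hG hInt a σ) (hA₂.add hA₁)
          (ghostRademacherSup_le hG a σ)
    _ = _ := by
      rw [integral_add hA₂ hA₁,
        hsnd.integral_comp_of_aestronglyMeasurable (hA σ).aestronglyMeasurable,
        hfst.integral_comp_of_aestronglyMeasurable (hA _).aestronglyMeasurable]

theorem integral_ghostRademacherSup_le [DecidableEq ι] (hG : G.Nonempty)
    (hInt : ∀ g ∈ G, Integrable g μ) (a : ℝ) :
    ∫ w, ghostRademacherSup G hG a (fun _ => true) w ∂(Measure.pi fun _ : ι => μ.prod μ) ≤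
      2 * ((2 ^ Fintype.card ι : ℝ)⁻¹ *
        ∑ σ : ι → Bool, ∫ z, shiftedRademacherSup G hG a σ z ∂(Measure.pi fun _ => μ)) := by
  have hswap (σ : ι → Bool) :
      ∫ w, ghostRademacherSup G hG a (fun _ => true) w ∂(Measure.pi fun _ : ι => μ.prod μ) =
        ∫ w, ghostRademacherSup G hG a σ w ∂(Measure.pi fun _ : ι => μ.prod μ) := by
    rw [← (measurePreserving_swapUnless σ).integral_comp_of_aestronglyMeasurable
      (integrable_ghostRademacherSup hG hInt a _).aestronglyMeasurable]
    simp only [ghostRademacherSup_swapUnless]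
  have hnot : ∑ σ : ι → Bool,
      ∫ z, shiftedRademacherSup G hG a (fun i => !σ i) z ∂(Measure.pi fun _ => μ) =
        ∑ σ : ι → Bool, ∫ z, shiftedRademacherSup G hG a σ z ∂(Measure.pi fun _ => μ) :=
    Fintype.sum_equiv (Equiv.piCongrRight fun _ => Equiv.boolNot) _ _ fun _ => rfl
  calc _ = (2 ^ Fintype.card ι : ℝ)⁻¹ * ∑ σ : ι → Bool,
        ∫ w, ghostRademacherSup G hG a σ w ∂(Measure.pi fun _ : ι => μ.prod μ) := by
        simp [← hswap]
    _ ≤ (2 ^ Fintype.card ι : ℝ)⁻¹ * ∑ σ : ι → Bool,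
        ((∫ z, shiftedRademacherSup G hG a σ z ∂(Measure.pi fun _ => μ)) +
          ∫ z, shiftedRademacherSup G hG a (fun i => !σ i) z ∂(Measure.pi fun _ => μ)) := by
        gcongr with σ
        exact integral_ghostRademacherSup_le_integral_add hG hInt a σ
    _ = _ := by rw [sum_add_distrib, hnot]; ring

end Rademacher

theorem shifted_symmetrization_expectation_general {𝒵 : Type*} [MeasurableSpace 𝒵]
    (μ : Measure 𝒵) [IsProbabilityMeasure μ]
    (n : ℕ) (hn : 0 < n) (G : Finset (𝒵 → ℝ)) (hG : G.Nonempty)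
    (hInt : ∀ g ∈ G, Integrable g μ)
    (c : ℝ) (hc : 0 ≤ c) :
    ∫ z, (G.sup' hG fun g => (∫ x, g x ∂μ) - (1 + c) * ((n : ℝ)⁻¹ * ∑ i, g (z i)))
        ∂(Measure.pi fun _ : Fin n => μ) ≤
      ((c + 2) / n) *
        ∫ z, ((2 ^ n : ℝ)⁻¹ * ∑ σ : Fin n → Bool, G.sup' hG fun g =>
            ∑ i, ((if σ i then (1 : ℝ) else -1) * g (z i) - (c / (c + 2)) * g (z i)))
          ∂(Measure.pi fun _ : Fin n => μ) := by
  have : Nonempty (Fin n) := ⟨⟨0, hn⟩⟩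
  have hghost := integral_sup'_integral_sub_le_integral_ghost (ι := Fin n) hG hInt (1 + c)
  have hsymm := integral_ghostRademacherSup_le (ι := Fin n) hG hInt (c / (c + 2))
  simp only [sup'_ghost_eq_mul_ghostRademacherSup hG (by linarith : -2 < c), integral_const_mul]
    at hghost
  simp only [Fintype.card_fin] at hghost hsymm
  calc _ ≤ (c + 2) / (2 * n) * ∫ w, ghostRademacherSup G hG (c / (c + 2)) (fun _ => true) w
        ∂(Measure.pi fun _ : Fin n => μ.prod μ) := hghost
    _ ≤ (c + 2) / (2 * n) * (2 * ((2 ^ n : ℝ)⁻¹ * ∑ σ : Fin n → Bool,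
        ∫ z, shiftedRademacherSup G hG (c / (c + 2)) σ z ∂(Measure.pi fun _ => μ))) :=
      mul_le_mul_of_nonneg_left hsymm (by positivity)
    _ = (c + 2) / n * ∫ z, ((2 ^ n : ℝ)⁻¹ * ∑ σ : Fin n → Bool,
          shiftedRademacherSup G hG (c / (c + 2)) σ z) ∂(Measure.pi fun _ => μ) := by
      rw [integral_const_mul, integral_finsetSum _ fun σ _ =>
        integrable_shiftedRademacherSup hG hInt _ σ]
      field_simp

/-- Shifted symmetrization in expectation: for a class `G` of integrable functions, an i.i.d.
sample of size `n` (modeled by the product measure), and `c ≥ 0`,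
`E sup_g (P g - (1+c) Pₙ g) ≤ ((c+2)/n) E E_ε sup_g Σᵢ (εᵢ g(Zᵢ) - (c/(c+2)) g(Zᵢ))`,
where the Rademacher expectation `E_ε` is the average over all sign patterns. -/
theorem shifted_symmetrization_expectation {𝒵 : Type*} [MeasurableSpace 𝒵]
    (μ : Measure 𝒵) [IsProbabilityMeasure μ]
    (n : ℕ) (hn : 0 < n) (G : Finset (𝒵 → ℝ)) (hG : G.Nonempty)
    (hmeas : ∀ g ∈ G, Measurable g) (hInt : ∀ g ∈ G, Integrable g μ)
    (c : ℝ) (hc : 0 ≤ c) :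
    ∫ z, (G.sup' hG fun g => (∫ x, g x ∂μ) - (1 + c) * ((n : ℝ)⁻¹ * ∑ i, g (z i)))
        ∂(Measure.pi fun _ : Fin n => μ) ≤
      ((c + 2) / n) *
        ∫ z, ((2 ^ n : ℝ)⁻¹ * ∑ σ : Fin n → Bool, G.sup' hG fun g =>
            ∑ i, ((if σ i then (1 : ℝ) else -1) * g (z i) - (c / (c + 2)) * g (z i)))
          ∂(Measure.pi fun _ : Fin n => μ) :=
  shifted_symmetrization_expectation_general μ n hn G hG hInt c hc
end

section
/- Shifted symmetrization in deviation: let G be a (B,1)-Bernstein class (i.e., P g² ≤ B·(P g) for all g∈G) with P g ≥ 0 for all g∈G. Fix constants c_1 > c_2 > 0. If n t ≥ B(1+c_2)²/c_2, then P( sup_{g∈G} (P − (1+c_1)P_n) g ≥ t ) ≤ 2 P( sup_{g∈G} ((1+c_2)P'_n − (1+c_1)P_n) g ≥ t/2 ), where P'_n is the empirical mean over an independent ghost sample of size n. -/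
/-!
Condition on the first sample `z` and let `g` attain the supremum of `(P - (1+c₁)Pₙ) g ≥ t`.
By Chebyshev applied to the ghost mean `P'ₙ g`, whose variance is at most `P g² / n ≤ B P g / n`,
the condition `n t ≥ B (1+c₂)²/c₂` guarantees that `(1+c₂) P'ₙ g ≥ P g - t/2` with conditional
probability at least `1/2`; on that event `((1+c₂)P'ₙ - (1+c₁)Pₙ) g ≥ t/2`. Integrating over `z`
(Fubini) gives the factor `2`. For `t ≤ 0` the condition forces `B ≤ 0`, so every `g ∈ G` vanishes
`μ`-a.e. and the right-hand event is almost sure.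
-/

open MeasureTheory Finset ProbabilityTheory
open scoped ENNReal

noncomputable def empiricalMean {𝒵 : Type*} {n : ℕ} (g : 𝒵 → ℝ) (y : Fin n → 𝒵) : ℝ :=
  (n : ℝ)⁻¹ * ∑ i, g (y i)

section EmpiricalMean

variable {𝒵 : Type*} [MeasurableSpace 𝒵] {μ : Measure 𝒵} [IsProbabilityMeasure μ] {n : ℕ}
  {g : 𝒵 → ℝ}

theorem measurable_empiricalMean (hg : Measurable g) :
    Measurable (empiricalMean (n := n) g) := by
  unfold empiricalMean
  fun_prop

theorem memLp_empiricalMean {p : ℝ≥0∞} (hg : MemLp g p μ) :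
    MemLp (empiricalMean g) p (Measure.pi fun _ : Fin n => μ) :=
  (memLp_finsetSum univ fun i _ =>
    hg.comp_measurePreserving (measurePreserving_eval _ i)).const_mul _

theorem integral_empiricalMean (hn : n ≠ 0) (hg : Integrable g μ) :
    ∫ y, empiricalMean g y ∂(Measure.pi fun _ : Fin n => μ) = ∫ x, g x ∂μ := by
  have hcoord (i : Fin n) : ∫ y, g (y i) ∂(Measure.pi fun _ : Fin n => μ) = ∫ x, g x ∂μ := by
    rw [← integral_map (measurePreserving_eval _ i).aemeasurable
      (by rw [(measurePreserving_eval _ i).map_eq]; exact hg.aestronglyMeasurable),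
      (measurePreserving_eval _ i).map_eq]
  have hint (i : Fin n) : Integrable (fun y : Fin n → 𝒵 => g (y i)) (Measure.pi fun _ => μ) :=
    (measurePreserving_eval _ i).integrable_comp_of_integrable hg
  unfold empiricalMean
  rw [integral_const_mul, integral_finsetSum univ fun i _ => hint i]
  simp only [hcoord, sum_const, card_univ, Fintype.card_fin, nsmul_eq_mul]
  field_simp

theorem variance_empiricalMean (hg : MemLp g 2 μ) :
    Var[empiricalMean g; Measure.pi fun _ : Fin n => μ] = Var[g; μ] / n := by
  have hsum : empiricalMean g = fun y => (n : ℝ)⁻¹ * (∑ i, fun ω : Fin n → 𝒵 => g (ω i)) y := by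
    ext y; simp [empiricalMean]
  rw [hsum, variance_const_mul, variance_sum_pi fun _ => hg]
  simp only [sum_const, card_univ, Fintype.card_fin, nsmul_eq_mul]
  rcases eq_or_ne (n : ℝ) 0 with h | h
  · simp [h]
  · field_simp

theorem measure_abs_empiricalMean_sub_ge_le (hn : n ≠ 0) (hg : MemLp g 2 μ) {s : ℝ}
    (hs : 0 < s) :
    (Measure.pi fun _ : Fin n => μ) {y | s ≤ |empiricalMean g y - ∫ x, g x ∂μ|} ≤
      ENNReal.ofReal (Var[g; μ] / (n * s ^ 2)) := by
  have := meas_ge_le_variance_div_sq (memLp_empiricalMean (n := n) hg) hs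
  rwa [integral_empiricalMean hn (hg.integrable one_le_two), variance_empiricalMean hg,
    div_div] at this

theorem empiricalMean_ae_eq_zero (hg : g =ᵐ[μ] 0) :
    ∀ᵐ y ∂(Measure.pi fun _ : Fin n => μ), empiricalMean g y = 0 := by
  filter_upwards [Filter.eventually_all.2 fun i =>
    (measurePreserving_eval (fun _ : Fin n => μ) i).quasiMeasurePreserving.ae hg] with y hy
  simp [empiricalMean, hy]

end EmpiricalMean

theorem Finset.measurable_sup'_apply {α ι δ : Type*} [MeasurableSpace δ] [SemilatticeSup α]
    [MeasurableSpace α] [MeasurableSup₂ α] {s : Finset ι} (hs : s.Nonempty) {f : ι → δ → α}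
    (hf : ∀ i ∈ s, Measurable (f i)) : Measurable fun x => s.sup' hs fun i => f i x := by
  convert Finset.measurable_sup' hs hf using 1
  ext x
  rw [Finset.sup'_apply]

theorem ae_eq_zero_of_bernstein_of_nonpos {α : Type*} [MeasurableSpace α] {μ : Measure α}
    {g : α → ℝ} {B : ℝ} (hg : Integrable (fun x => g x ^ 2) μ)
    (hBern : ∫ x, g x ^ 2 ∂μ ≤ B * ∫ x, g x ∂μ) (hpos : 0 ≤ ∫ x, g x ∂μ) (hB : B ≤ 0) :
    g =ᵐ[μ] 0 := by
  have hsq_le : ∫ x, g x ^ 2 ∂μ ≤ 0 := hBern.trans (mul_nonpos_of_nonpos_of_nonneg hB hpos)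
  have hsq := (integral_eq_zero_iff_of_nonneg (fun x => sq_nonneg (g x)) hg).1
    (hsq_le.antisymm (integral_nonneg fun x => sq_nonneg _))
  filter_upwards [hsq] with x hx
  exact pow_eq_zero_iff two_ne_zero |>.1 hx

theorem measure_le_mul_prod_of_one_le_mul_measure_prodMk {α β : Type*} [MeasurableSpace α]
    [MeasurableSpace β] {μ : Measure α} {ν : Measure β} [SFinite ν] {E : Set α}
    {D : Set (α × β)} (hD : MeasurableSet D) {c : ℝ≥0∞}
    (h : ∀ z ∈ E, 1 ≤ c * ν (Prod.mk z ⁻¹' D)) : μ E ≤ c * μ.prod ν D := by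
  calc μ E = ∫⁻ _ in E, 1 ∂μ := (setLIntegral_one E).symm
    _ ≤ ∫⁻ z in E, c * ν (Prod.mk z ⁻¹' D) ∂μ :=
      setLIntegral_mono ((measurable_measure_prodMk_left hD).const_mul c) h
    _ ≤ ∫⁻ z, c * ν (Prod.mk z ⁻¹' D) ∂μ := setLIntegral_le_lintegral _ _
    _ = c * μ.prod ν D := by
      rw [lintegral_const_mul c (measurable_measure_prodMk_left hD), Measure.prod_apply hD]

theorem one_le_two_mul_measure_of_measure_compl_le {α : Type*} [MeasurableSpace α]
    {μ : Measure α} [IsProbabilityMeasure μ] {A : Set α} (h : μ Aᶜ ≤ 2⁻¹) : 1 ≤ 2 * μ A := by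
  have hcover : 1 ≤ μ A + 2⁻¹ := by
    calc 1 = μ (A ∪ Aᶜ) := by rw [Set.union_compl_self, measure_univ]
      _ ≤ μ A + μ Aᶜ := measure_union_le _ _
      _ ≤ μ A + 2⁻¹ := by gcongr
  refine ENNReal.le_of_add_le_add_right ENNReal.one_ne_top ?_
  calc 1 + 1 = 2 * 1 := by norm_num
    _ ≤ 2 * (μ A + 2⁻¹) := by gcongr
    _ = 2 * μ A + 1 := by rw [mul_add, ENNReal.mul_inv_cancel two_ne_zero ENNReal.ofNat_ne_top]

section Symmetrization

variable {𝒵 : Type*} [MeasurableSpace 𝒵] {μ : Measure 𝒵} [IsProbabilityMeasure μ] {n : ℕ}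

theorem measurableSet_le_sup'_ghost {G : Finset (𝒵 → ℝ)} (hG : G.Nonempty)
    (hmeas : ∀ g ∈ G, Measurable g) (a b r : ℝ) :
    MeasurableSet {p : (Fin n → 𝒵) × (Fin n → 𝒵) |
      r ≤ G.sup' hG fun g => a * empiricalMean g p.2 - b * empiricalMean g p.1} := by
  refine measurableSet_le measurable_const (Finset.measurable_sup'_apply hG fun g hg => ?_)
  have := measurable_empiricalMean (n := n) (hmeas g hg)
  fun_prop

theorem ae_le_sup'_ghost_of_ae_eq_zero {G : Finset (𝒵 → ℝ)} (hG : G.Nonempty)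
    (hzero : ∀ g ∈ G, g =ᵐ[μ] 0) (a b : ℝ) {r : ℝ} (hr : r ≤ 0) :
    ∀ᵐ p ∂(Measure.pi fun _ : Fin n => μ).prod (Measure.pi fun _ : Fin n => μ),
      r ≤ G.sup' hG fun g => a * empiricalMean g p.2 - b * empiricalMean g p.1 := by
  have hmean : ∀ᵐ y ∂(Measure.pi fun _ : Fin n => μ), ∀ g ∈ G, empiricalMean g y = 0 :=
    (Filter.eventually_all_finset G).2 fun g hg => empiricalMean_ae_eq_zero (hzero g hg)
  filter_upwards [measurePreserving_fst.quasiMeasurePreserving.ae hmean,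
    measurePreserving_snd.quasiMeasurePreserving.ae hmean] with p hp₁ hp₂
  obtain ⟨g, hg⟩ := hG
  refine le_trans ?_ (le_sup' _ hg)
  simp [hp₁ g hg, hp₂ g hg, hr]

theorem one_le_two_mul_measure_shifted_empiricalMean_ge {g : 𝒵 → ℝ} (hn : n ≠ 0) (hg : MemLp g 2 μ)
    {B c t : ℝ} (hBern : ∫ z, g z ^ 2 ∂μ ≤ B * ∫ z, g z ∂μ) (hpos : 0 ≤ ∫ z, g z ∂μ)
    (hc : 0 < c) (ht : 0 < t) (hnt : B * (1 + c) ^ 2 / c ≤ n * t) :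
    1 ≤ 2 * (Measure.pi fun _ : Fin n => μ)
      {y | (∫ z, g z ∂μ) - t / 2 ≤ (1 + c) * empiricalMean g y} := by
  set m := ∫ z, g z ∂μ
  -- `s` is the deviation with `(1 + c) (m - s) = m - t / 2`; the Bernstein condition and the
  -- constraint on `n t` make Chebyshev's bound at `s` at most `1 / 2`
  set s := (c * m + t / 2) / (1 + c)
  have hs_eq : s * (1 + c) = c * m + t / 2 := div_mul_cancel₀ _ (by positivity)
  have hs : 0 < s := by positivity
  have hBm : B * m ≤ n * s ^ 2 / 2 := by
    have hnt' : B * (1 + c) ^ 2 ≤ c * (n * t) := by rw [div_le_iff₀ hc] at hnt; linarith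
    refine le_of_mul_le_mul_right ?_ (by positivity : (0 : ℝ) < (1 + c) ^ 2)
    calc B * m * (1 + c) ^ 2 = B * (1 + c) ^ 2 * m := by ring
      _ ≤ c * (n * t) * m := by gcongr
      _ ≤ n * (c * m + t / 2) ^ 2 / 2 := by nlinarith [sq_nonneg (c * m - t / 2)]
      _ = n * s ^ 2 / 2 * (1 + c) ^ 2 := by rw [← hs_eq]; ring
  have hvar : Var[g; μ] / (n * s ^ 2) ≤ 2⁻¹ := by
    have hsq : Var[g; μ] ≤ ∫ z, g z ^ 2 ∂μ := variance_le_expectation_sq hg.aestronglyMeasurable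
    rw [div_le_iff₀ (by positivity)]
    linarith
  refine one_le_two_mul_measure_of_measure_compl_le ?_
  calc _ ≤ (Measure.pi fun _ : Fin n => μ) {y | s ≤ |empiricalMean g y - m|} := by
        refine measure_mono fun y hy => ?_
        simp only [Set.mem_compl_iff, Set.mem_ofPred_eq, not_le] at hy ⊢
        rw [abs_sub_comm]
        refine le_abs_self _ |>.trans' ?_
        nlinarith
    _ ≤ ENNReal.ofReal (Var[g; μ] / (n * s ^ 2)) := measure_abs_empiricalMean_sub_ge_le hn hg hs
    _ ≤ 2⁻¹ := by simpa using ENNReal.ofReal_le_ofReal hvar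

end Symmetrization

theorem shifted_symmetrization_deviation_general {𝒵 : Type*} [MeasurableSpace 𝒵]
    (μ : Measure 𝒵) [IsProbabilityMeasure μ]
    (n : ℕ) (hn : 0 < n) (G : Finset (𝒵 → ℝ)) (hG : G.Nonempty)
    (hmeas : ∀ g ∈ G, Measurable g)
    (hInt2 : ∀ g ∈ G, Integrable (fun z => (g z) ^ 2) μ)
    (B c₁ c₂ t : ℝ) (hc₂ : 0 < c₂)
    (hBern : ∀ g ∈ G, ∫ z, (g z) ^ 2 ∂μ ≤ B * ∫ z, g z ∂μ)
    (hpos : ∀ g ∈ G, 0 ≤ ∫ z, g z ∂μ)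
    (hnt : B * (1 + c₂) ^ 2 / c₂ ≤ n * t) :
    (Measure.pi fun _ : Fin n => μ)
        {z | t ≤ G.sup' hG fun g =>
          (∫ x, g x ∂μ) - (1 + c₁) * ((n : ℝ)⁻¹ * ∑ i, g (z i))} ≤
      2 * ((Measure.pi fun _ : Fin n => μ).prod (Measure.pi fun _ : Fin n => μ))
        {p | t / 2 ≤ G.sup' hG fun g =>
          (1 + c₂) * ((n : ℝ)⁻¹ * ∑ i, g (p.2 i)) -
            (1 + c₁) * ((n : ℝ)⁻¹ * ∑ i, g (p.1 i))} := by
  set ν := Measure.pi fun _ : Fin n => μ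
  rcases le_or_gt t 0 with ht | ht
  · have hB : B ≤ 0 := by
      have : B * ((1 + c₂) ^ 2 / c₂) ≤ 0 := by
        rw [← mul_div_assoc]; exact hnt.trans (mul_nonpos_of_nonneg_of_nonpos n.cast_nonneg ht)
      exact nonpos_of_mul_nonpos_left this (by positivity)
    have hD := ae_le_sup'_ghost_of_ae_eq_zero (μ := μ) (n := n) hG
      (fun g hg => ae_eq_zero_of_bernstein_of_nonpos (hInt2 g hg) (hBern g hg) (hpos g hg) hB)
      (1 + c₂) (1 + c₁) (r := t / 2) (by linarith)
    calc _ ≤ 1 := prob_le_one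
      _ ≤ 2 * (ν.prod ν) Set.univ := by norm_num
      _ ≤ _ := by gcongr 2 * ?_; exact measure_mono_ae (hD.mono fun p hp _ => hp)
  · refine measure_le_mul_prod_of_one_le_mul_measure_prodMk
      (measurableSet_le_sup'_ghost hG hmeas _ _ _) fun z hz => ?_
    obtain ⟨g, hg, hsup⟩ :=
      exists_mem_eq_sup' hG fun g => (∫ x, g x ∂μ) - (1 + c₁) * empiricalMean g z
    have hgz : t ≤ (∫ x, g x ∂μ) - (1 + c₁) * empiricalMean g z := hsup ▸ hz
    have hmem : MemLp g 2 μ :=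
      (memLp_two_iff_integrable_sq (hmeas g hg).aestronglyMeasurable).2 (hInt2 g hg)
    refine (one_le_two_mul_measure_shifted_empiricalMean_ge hn.ne' hmem (hBern g hg) (hpos g hg) hc₂ ht
      hnt).trans ?_
    gcongr 2 * ?_
    refine measure_mono fun y hy => ?_
    simp only [Set.mem_preimage, Set.mem_ofPred_eq] at hy ⊢
    exact le_sup'_of_le _ hg (by linarith)

/-- Shifted symmetrization in deviation: if `G` is a `(B,1)`-Bernstein class with nonnegative
means, `c₁ > c₂ > 0` and `n t ≥ B (1+c₂)²/c₂`, then
`P(sup_g (P - (1+c₁)Pₙ) g ≥ t) ≤ 2 P(sup_g ((1+c₂)P'ₙ - (1+c₁)Pₙ) g ≥ t/2)`,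
where `Pₙ, P'ₙ` are empirical means over two independent i.i.d. samples of size `n`. -/
theorem shifted_symmetrization_deviation {𝒵 : Type*} [MeasurableSpace 𝒵]
    (μ : Measure 𝒵) [IsProbabilityMeasure μ]
    (n : ℕ) (hn : 0 < n) (G : Finset (𝒵 → ℝ)) (hG : G.Nonempty)
    (hmeas : ∀ g ∈ G, Measurable g)
    (hInt : ∀ g ∈ G, Integrable g μ)
    (hInt2 : ∀ g ∈ G, Integrable (fun z => (g z) ^ 2) μ)
    (B c₁ c₂ t : ℝ) (hc₂ : 0 < c₂) (hc : c₂ < c₁)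
    (hBern : ∀ g ∈ G, ∫ z, (g z) ^ 2 ∂μ ≤ B * ∫ z, g z ∂μ)
    (hpos : ∀ g ∈ G, 0 ≤ ∫ z, g z ∂μ)
    (hnt : B * (1 + c₂) ^ 2 / c₂ ≤ n * t) :
    (Measure.pi fun _ : Fin n => μ)
        {z | t ≤ G.sup' hG fun g =>
          (∫ x, g x ∂μ) - (1 + c₁) * ((n : ℝ)⁻¹ * ∑ i, g (z i))} ≤
      2 * ((Measure.pi fun _ : Fin n => μ).prod (Measure.pi fun _ : Fin n => μ))
        {p | t / 2 ≤ G.sup' hG fun g =>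
          (1 + c₂) * ((n : ℝ)⁻¹ * ∑ i, g (p.2 i)) -
            (1 + c₁) * ((n : ℝ)⁻¹ * ∑ i, g (p.1 i))} :=
  shifted_symmetrization_deviation_general μ n hn G hG hmeas hInt2 B c₁ c₂ t hc₂ hBern hpos hnt
end

section
/- Under Massart's bounded noise condition with margin h (i.e., f* ∈ F is the Bayes classifier and |E[Y|X]| ≥ h a.s., Y ∈ {−1,+1}), the excess loss class G_Y = { (x,y) ↦ 1[f(x)≠y] − 1[f*(x)≠y] : f ∈ F } is a (1/h, 1)-Bernstein class: for every g ∈ G_Y, P g² ≤ (1/h)·P g. Moreover the Bayes risk satisfies R(f*) ≤ (1/2)(1 − h). -/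
open MeasureTheory

/-! Conditionally on the instance `x`, a label in `{-1, 1}` with conditional mean `η x` equals `1`
with probability `(1 + η x) / 2`, so the expectation of any bounded function `ψ(x, y)` of instance
and label is the integral over the marginal of `(1 + η x) / 2 * ψ(x, 1) + (1 - η x) / 2 * ψ(x, -1)`
(`η ∘ fst` is the conditional expectation of the label given the instance, and a function of a
`±1` label is affine in it). Pointwise, the excess loss of `f` over `f* = sign η` has conditional
mean `0`, `|η x|` or `(1 + |η x|) / 2` and conditional second moment `0`, `1` or `(1 + |η x|) / 2`,
according as `f x = f* x`, `f x = -f* x` or `f x ∉ {-1, 1}`; since `h ≤ |η x| ≤ 1`, the second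
moment is at most `1 / h` times the mean. Likewise `f*` errs with conditional probability
`(1 - |η x|) / 2 ≤ (1 - h) / 2`. -/

section

variable {X : Type*} [MeasurableSpace X]

theorem ae_le_of_forall_setIntegral_le_mul_measureReal {ν : Measure X} [IsFiniteMeasure ν]
    {η : X → ℝ} (hη : Measurable η) {c : ℝ}
    (hle : ∀ A, MeasurableSet A → ∫ x in A, η x ∂ν ≤ c * ν.real A) :
    ∀ᵐ x ∂ν, η x ≤ c := by
  have hS : ∀ n : ℕ, MeasurableSet {x | |η x| ≤ n} := fun n =>
    measurableSet_le hη.abs measurable_const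
  -- `η` need not be integrable, but it is on each `{|η| ≤ n}`.
  have htrunc : ∀ n : ℕ, ∀ᵐ x ∂ν, |η x| ≤ n → η x ≤ c := by
    intro n
    refine (ae_restrict_iff' (hS n)).1 (ae_le_of_forall_setIntegral_le (g := fun _ => c) ?_
      (integrable_const c) fun A hA _ => ?_)
    · refine Integrable.of_bound hη.aestronglyMeasurable n ?_
      filter_upwards [ae_restrict_mem (hS n)] with x hx using hx
    · rw [Measure.restrict_restrict hA, setIntegral_const, smul_eq_mul, mul_comm]
      exact hle _ (hA.inter (hS n))
  filter_upwards [ae_all_iff.2 htrunc] with x hx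
  obtain ⟨n, hn⟩ := exists_nat_ge |η x|
  exact hx n hn

def IsRegressionFunction (μ : Measure (X × ℝ)) (η : X → ℝ) : Prop :=
  ∀ A : Set X, MeasurableSet A →
    ∫ p in {p : X × ℝ | p.1 ∈ A}, p.2 ∂μ = ∫ x in A, η x ∂(μ.map Prod.fst)

theorem ae_abs_snd_le_one {μ : Measure (X × ℝ)} (hlabel : ∀ᵐ p ∂μ, p.2 = 1 ∨ p.2 = -1) :
    ∀ᵐ p ∂μ, |p.2| ≤ 1 :=
  hlabel.mono fun p hp => by rcases hp with hp | hp <;> simp [hp]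

namespace IsRegressionFunction

variable {μ : Measure (X × ℝ)} [IsFiniteMeasure μ] {η : X → ℝ}

theorem ae_abs_le (hcond : IsRegressionFunction μ η) (hη : Measurable η) {C : ℝ}
    (hY : ∀ᵐ p ∂μ, |p.2| ≤ C) : ∀ᵐ x ∂(μ.map Prod.fst), |η x| ≤ C := by
  have hbound : ∀ A, MeasurableSet A →
      |∫ x in A, η x ∂(μ.map Prod.fst)| ≤ C * (μ.map Prod.fst).real A := by
    intro A hA
    rw [← hcond A hA, map_measureReal_apply measurable_fst hA]
    exact norm_setIntegral_le_of_norm_le_const_ae' (f := fun p => p.2) (measure_lt_top _ _)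
      (hY.mono fun p hp _ => hp)
  have hle := ae_le_of_forall_setIntegral_le_mul_measureReal hη fun A hA =>
    (le_abs_self _).trans (hbound A hA)
  have hge := ae_le_of_forall_setIntegral_le_mul_measureReal hη.neg fun A hA => by
    rw [Pi.neg_def, integral_neg]
    exact (neg_le_abs _).trans (hbound A hA)
  filter_upwards [hle, hge] with x hx hx' using abs_le.2 ⟨neg_le.1 hx', hx⟩

theorem integrable (hcond : IsRegressionFunction μ η) (hη : Measurable η)
    (hlabel : ∀ᵐ p ∂μ, p.2 = 1 ∨ p.2 = -1) : Integrable η (μ.map Prod.fst) :=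
  Integrable.of_bound hη.aestronglyMeasurable 1 (hcond.ae_abs_le hη (ae_abs_snd_le_one hlabel))

theorem ae_eq_condExp (hcond : IsRegressionFunction μ η)
    (hY : Integrable (fun p : X × ℝ => p.2) μ) (hη : Measurable η)
    (hηi : Integrable η (μ.map Prod.fst)) :
    (fun p : X × ℝ => η p.1) =ᵐ[μ] μ[fun p => p.2 | MeasurableSpace.comap Prod.fst ‹_›] := by
  refine ae_eq_condExp_of_forall_setIntegral_eq measurable_fst.comap_le hY
    (fun _ _ _ => (hηi.comp_measurable measurable_fst).integrableOn) ?_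
    (hη.comp (comap_measurable _)).aestronglyMeasurable
  rintro _ ⟨A, hA, rfl⟩ _
  exact (setIntegral_map hA hη.aestronglyMeasurable measurable_fst.aemeasurable).symm.trans
    (hcond A hA).symm

theorem integral_mul_snd (hcond : IsRegressionFunction μ η)
    (hY : Integrable (fun p : X × ℝ => p.2) μ) (hη : Measurable η)
    (hηi : Integrable η (μ.map Prod.fst)) {φ : X → ℝ} (hφ : Measurable φ) {C : ℝ}
    (hφC : ∀ x, |φ x| ≤ C) :
    ∫ p, φ p.1 * p.2 ∂μ = ∫ x, φ x * η x ∂(μ.map Prod.fst) := by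
  have hφm : StronglyMeasurable[MeasurableSpace.comap Prod.fst ‹_›] fun p : X × ℝ => φ p.1 :=
    (hφ.comp (comap_measurable _)).stronglyMeasurable
  have hint : Integrable (fun p : X × ℝ => φ p.1 * p.2) μ :=
    hY.bdd_mul (hφ.comp measurable_fst).aestronglyMeasurable (ae_of_all _ fun p => hφC p.1)
  calc ∫ p, φ p.1 * p.2 ∂μ
      = ∫ p, μ[fun p => φ p.1 * p.2 | MeasurableSpace.comap Prod.fst ‹_›] p ∂μ :=
        (integral_condExp measurable_fst.comap_le).symm
    _ = ∫ p, φ p.1 * η p.1 ∂μ := integral_congr_ae <|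
        (condExp_mul_of_stronglyMeasurable_left hφm hint hY).trans
          (hcond.ae_eq_condExp hY hη hηi).symm.mul_left
    _ = ∫ x, φ x * η x ∂(μ.map Prod.fst) :=
        (integral_map measurable_fst.aemeasurable (hφ.mul hη).aestronglyMeasurable).symm

end IsRegressionFunction

end

/-- `E[ψ(x, Y) | X = x]` for a label `Y ∈ {-1, 1}` with `E[Y | X = x] = η x`, i.e.
`P(Y = 1 | X = x) = (1 + η x) / 2`. -/
noncomputable def binaryCondMean {X : Type*} (η : X → ℝ) (ψ : X → ℝ → ℝ) (x : X) : ℝ :=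
  (1 + η x) / 2 * ψ x 1 + (1 - η x) / 2 * ψ x (-1)

section

variable {X : Type*} [MeasurableSpace X]

theorem integrable_binaryCondMean {ν : Measure X} [IsFiniteMeasure ν] {η : X → ℝ}
    (hηi : Integrable η ν) {ψ : X → ℝ → ℝ} (hψ₁ : Measurable (ψ · 1))
    (hψ₂ : Measurable (ψ · (-1))) {C : ℝ} (hC : ∀ x y, |ψ x y| ≤ C) :
    Integrable (binaryCondMean η ψ) ν :=
  ((((integrable_const 1).add hηi).div_const 2).mul_bdd hψ₁.aestronglyMeasurable
      (ae_of_all _ fun x => hC x 1)).add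
    ((((integrable_const 1).sub hηi).div_const 2).mul_bdd hψ₂.aestronglyMeasurable
      (ae_of_all _ fun x => hC x (-1)))

theorem IsRegressionFunction.integral_eq_integral_binaryCondMean {μ : Measure (X × ℝ)}
    [IsFiniteMeasure μ] {η : X → ℝ} (hcond : IsRegressionFunction μ η) (hη : Measurable η)
    (hlabel : ∀ᵐ p ∂μ, p.2 = 1 ∨ p.2 = -1) {ψ : X → ℝ → ℝ} (hψ₁ : Measurable (ψ · 1))
    (hψ₂ : Measurable (ψ · (-1))) {C : ℝ} (hC : ∀ x y, |ψ x y| ≤ C) :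
    ∫ p, ψ p.1 p.2 ∂μ = ∫ x, binaryCondMean η ψ x ∂(μ.map Prod.fst) := by
  have hYi : Integrable (fun p : X × ℝ => p.2) μ :=
    Integrable.of_bound measurable_snd.aestronglyMeasurable 1 (ae_abs_snd_le_one hlabel)
  have hηi := hcond.integrable hη hlabel
  -- On `{-1, 1}` every function of the label is affine in it: `ψ x y = c x + d x * y`.
  set c : X → ℝ := fun x => (ψ x 1 + ψ x (-1)) / 2
  set d : X → ℝ := fun x => (ψ x 1 - ψ x (-1)) / 2
  have hc : Measurable c := (hψ₁.add hψ₂).div_const 2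
  have hd : Measurable d := (hψ₁.sub hψ₂).div_const 2
  have hcC : ∀ x, |c x| ≤ C := fun x => by
    obtain ⟨h₁, h₂⟩ := abs_le.1 (hC x 1); obtain ⟨h₃, h₄⟩ := abs_le.1 (hC x (-1))
    exact abs_le.2 ⟨by simp only [c]; linarith, by simp only [c]; linarith⟩
  have hdC : ∀ x, |d x| ≤ C := fun x => by
    obtain ⟨h₁, h₂⟩ := abs_le.1 (hC x 1); obtain ⟨h₃, h₄⟩ := abs_le.1 (hC x (-1))
    exact abs_le.2 ⟨by simp only [d]; linarith, by simp only [d]; linarith⟩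
  have haffine : (fun p : X × ℝ => ψ p.1 p.2) =ᵐ[μ] fun p => c p.1 + d p.1 * p.2 := by
    filter_upwards [hlabel] with p hp
    rcases hp with hp | hp <;> simp only [c, d, hp] <;> ring
  have hcint : Integrable c (μ.map Prod.fst) :=
    Integrable.of_bound hc.aestronglyMeasurable C (ae_of_all _ hcC)
  calc ∫ p, ψ p.1 p.2 ∂μ = ∫ p, c p.1 ∂μ + ∫ p, d p.1 * p.2 ∂μ := by
        rw [integral_congr_ae haffine]
        exact integral_add (hcint.comp_measurable measurable_fst)
          (hYi.bdd_mul (hd.comp measurable_fst).aestronglyMeasurable (ae_of_all _ fun p => hdC p.1))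
    _ = ∫ x, c x ∂(μ.map Prod.fst) + ∫ x, d x * η x ∂(μ.map Prod.fst) := by
        rw [integral_map measurable_fst.aemeasurable hc.aestronglyMeasurable,
          hcond.integral_mul_snd hYi hη hηi hd hdC]
    _ = ∫ x, binaryCondMean η ψ x ∂(μ.map Prod.fst) := by
        rw [← integral_add hcint (hηi.bdd_mul hd.aestronglyMeasurable (ae_of_all _ hdC))]
        congr 1 with x
        simp only [binaryCondMean, c, d]
        ring

end

noncomputable def zeroOneLoss (a y : ℝ) : ℝ := if a ≠ y then 1 else 0

theorem Measurable.zeroOneLoss {X : Type*} [MeasurableSpace X] {f : X → ℝ} (hf : Measurable f)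
    (y : ℝ) : Measurable fun x => zeroOneLoss (f x) y :=
  Measurable.ite (hf (measurableSet_singleton y)).compl measurable_const measurable_const

theorem abs_zeroOneLoss_le_one (a y : ℝ) : |zeroOneLoss a y| ≤ 1 := by
  unfold zeroOneLoss; split_ifs <;> norm_num

theorem abs_zeroOneLoss_sub_le_one (a b y : ℝ) : |zeroOneLoss a y - zeroOneLoss b y| ≤ 1 := by
  unfold zeroOneLoss; split_ifs <;> norm_num

section

variable {X : Type*} {η s : X → ℝ} {x : X}

theorem binaryCondMean_zeroOneLoss_bayes (hs : s x = if 0 ≤ η x then 1 else -1) :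
    binaryCondMean η (fun x y => zeroOneLoss (s x) y) x = (1 - |η x|) / 2 := by
  rcases le_or_gt 0 (η x) with ht | ht <;>
  · norm_num [binaryCondMean, zeroOneLoss, hs, ht, abs_of_nonneg, abs_of_neg]

theorem binaryCondMean_excess_zeroOneLoss_sq_le {h : ℝ} (hh : 0 < h) (hh1 : h ≤ 1) (f : X → ℝ)
    (hx : h ≤ |η x|) (hx1 : |η x| ≤ 1) (hs : s x = if 0 ≤ η x then 1 else -1) :
    binaryCondMean η (fun x y => (zeroOneLoss (f x) y - zeroOneLoss (s x) y) ^ 2) x ≤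
      1 / h * binaryCondMean η (fun x y => zeroOneLoss (f x) y - zeroOneLoss (s x) y) x := by
  have hk : 1 ≤ h⁻¹ := (one_le_inv₀ hh).2 hh1
  have hkη : 1 ≤ h⁻¹ * |η x| := by
    rw [← inv_mul_cancel₀ hh.ne']
    gcongr
  rcases le_or_gt 0 (η x) with ht | ht <;>
  [rw [abs_of_nonneg ht] at hx1 hkη; rw [abs_of_neg ht] at hx1 hkη] <;>
  by_cases h₁ : f x = 1 <;> by_cases h₂ : f x = -1 <;>
  norm_num [binaryCondMean, zeroOneLoss, hs, ht, h₁, h₂] <;> nlinarith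

end

namespace IsRegressionFunction

variable {X : Type*} [MeasurableSpace X] {μ : Measure (X × ℝ)} {η s : X → ℝ} {h : ℝ}

theorem integral_excess_zeroOneLoss_sq_le [IsFiniteMeasure μ] (hcond : IsRegressionFunction μ η)
    (hη : Measurable η) (hlabel : ∀ᵐ p ∂μ, p.2 = 1 ∨ p.2 = -1) (hh : 0 < h) (hh1 : h ≤ 1)
    (hmargin : ∀ᵐ x ∂(μ.map Prod.fst), h ≤ |η x|) (hs_meas : Measurable s)
    (hs : ∀ x, s x = if 0 ≤ η x then 1 else -1) {f : X → ℝ} (hf : Measurable f) :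
    ∫ p, (zeroOneLoss (f p.1) p.2 - zeroOneLoss (s p.1) p.2) ^ 2 ∂μ ≤
      1 / h * ∫ p, (zeroOneLoss (f p.1) p.2 - zeroOneLoss (s p.1) p.2) ∂μ := by
  have hη₁ := hcond.ae_abs_le hη (ae_abs_snd_le_one hlabel)
  have hηi := hcond.integrable hη hlabel
  have hexcess : ∀ x y, |zeroOneLoss (f x) y - zeroOneLoss (s x) y| ≤ 1 := fun x y =>
    abs_zeroOneLoss_sub_le_one _ _ _
  have hexcess_sq : ∀ x y, |(zeroOneLoss (f x) y - zeroOneLoss (s x) y) ^ 2| ≤ 1 :=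
    fun x y => by rw [abs_pow]; exact pow_le_one₀ (abs_nonneg _) (hexcess x y)
  have hmeas : ∀ y, Measurable fun x => zeroOneLoss (f x) y - zeroOneLoss (s x) y :=
    fun y => (hf.zeroOneLoss y).sub (hs_meas.zeroOneLoss y)
  rw [hcond.integral_eq_integral_binaryCondMean hη hlabel ((hmeas 1).pow_const 2)
      ((hmeas (-1)).pow_const 2) hexcess_sq,
    hcond.integral_eq_integral_binaryCondMean hη hlabel (hmeas 1) (hmeas (-1)) hexcess,
    ← integral_const_mul]
  refine integral_mono_ae (integrable_binaryCondMean hηi ((hmeas 1).pow_const 2)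
      ((hmeas (-1)).pow_const 2) hexcess_sq)
    ((integrable_binaryCondMean hηi (hmeas 1) (hmeas (-1)) hexcess).const_mul _) ?_
  filter_upwards [hmargin, hη₁] with x hx hx₁
  exact binaryCondMean_excess_zeroOneLoss_sq_le hh hh1 f hx hx₁ (hs x)

theorem integral_zeroOneLoss_bayes_le [IsProbabilityMeasure μ] (hcond : IsRegressionFunction μ η)
    (hη : Measurable η) (hlabel : ∀ᵐ p ∂μ, p.2 = 1 ∨ p.2 = -1)
    (hmargin : ∀ᵐ x ∂(μ.map Prod.fst), h ≤ |η x|) (hs_meas : Measurable s)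
    (hs : ∀ x, s x = if 0 ≤ η x then 1 else -1) :
    ∫ p, zeroOneLoss (s p.1) p.2 ∂μ ≤ (1 - h) / 2 := by
  have hbdd : ∀ x y, |zeroOneLoss (s x) y| ≤ 1 := fun x y => abs_zeroOneLoss_le_one _ _
  have : IsProbabilityMeasure (μ.map Prod.fst) :=
    Measure.isProbabilityMeasure_map measurable_fst.aemeasurable
  calc ∫ p, zeroOneLoss (s p.1) p.2 ∂μ
      = ∫ x, binaryCondMean η (fun x y => zeroOneLoss (s x) y) x ∂(μ.map Prod.fst) :=
        hcond.integral_eq_integral_binaryCondMean hη hlabel (hs_meas.zeroOneLoss 1)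
          (hs_meas.zeroOneLoss (-1)) hbdd
    _ ≤ ∫ _, (1 - h) / 2 ∂(μ.map Prod.fst) := by
        refine integral_mono_ae (integrable_binaryCondMean (hcond.integrable hη hlabel)
          (hs_meas.zeroOneLoss 1) (hs_meas.zeroOneLoss (-1)) hbdd) (integrable_const _) ?_
        filter_upwards [hmargin] with x hx
        rw [binaryCondMean_zeroOneLoss_bayes (hs x)]
        linarith
    _ = (1 - h) / 2 := by simp

end IsRegressionFunction

open Classical in
theorem massart_bernstein_general {X : Type*} [MeasurableSpace X]
    (μ : Measure (X × ℝ)) [IsProbabilityMeasure μ]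
    (h : ℝ) (hh : 0 < h) (hh1 : h ≤ 1)
    (η : X → ℝ) (hη : Measurable η)
    (hcond : ∀ A : Set X, MeasurableSet A →
      ∫ p in {p : X × ℝ | p.1 ∈ A}, p.2 ∂μ = ∫ x in A, η x ∂(μ.map Prod.fst))
    (hlabel : ∀ᵐ p ∂μ, p.2 = 1 ∨ p.2 = -1)
    (hmargin : ∀ᵐ x ∂(μ.map Prod.fst), h ≤ |η x|)
    (fs : X → ℝ) (hfs : ∀ x, fs x = if 0 ≤ η x then 1 else -1)
    (F : Set (X → ℝ)) :
    (∀ f ∈ F, Measurable f →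
      ∫ p, ((if f p.1 ≠ p.2 then (1 : ℝ) else 0) - (if fs p.1 ≠ p.2 then 1 else 0)) ^ 2 ∂μ
        ≤ (1 / h) *
          ∫ p, ((if f p.1 ≠ p.2 then (1 : ℝ) else 0) - (if fs p.1 ≠ p.2 then 1 else 0)) ∂μ) ∧
    (μ {p : X × ℝ | fs p.1 ≠ p.2}).toReal ≤ (1 - h) / 2 := by
  have hreg : IsRegressionFunction μ η := hcond
  have hfs_meas : Measurable fs := by
    rw [funext hfs]
    exact Measurable.ite (measurableSet_le measurable_const hη) measurable_const measurable_const
  refine ⟨fun f _ hf =>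
    hreg.integral_excess_zeroOneLoss_sq_le hη hlabel hh hh1 hmargin hfs_meas hfs hf, ?_⟩
  have hS : MeasurableSet {p : X × ℝ | fs p.1 ≠ p.2} :=
    (measurableSet_eq_fun (hfs_meas.comp measurable_fst) measurable_snd).compl
  calc (μ {p : X × ℝ | fs p.1 ≠ p.2}).toReal = ∫ p, zeroOneLoss (fs p.1) p.2 ∂μ := by
        rw [← measureReal_def, ← integral_indicator_one hS]
        congr 1 with p
        simp [Set.indicator, zeroOneLoss]
    _ ≤ (1 - h) / 2 := hreg.integral_zeroOneLoss_bayes_le hη hlabel hmargin hfs_meas hfs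

open Classical in
theorem massart_bernstein {X : Type*} [MeasurableSpace X]
    (μ : Measure (X × ℝ)) [IsProbabilityMeasure μ]
    (h : ℝ) (hh : 0 < h) (hh1 : h ≤ 1)
    (η : X → ℝ) (hη : Measurable η)
    (hcond : ∀ A : Set X, MeasurableSet A →
      ∫ p in {p : X × ℝ | p.1 ∈ A}, p.2 ∂μ = ∫ x in A, η x ∂(μ.map Prod.fst))
    (hlabel : ∀ᵐ p ∂μ, p.2 = 1 ∨ p.2 = -1)
    (hmargin : ∀ᵐ x ∂(μ.map Prod.fst), h ≤ |η x|)
    (fs : X → ℝ) (hfs : ∀ x, fs x = if 0 ≤ η x then 1 else -1)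
    (F : Set (X → ℝ)) (hfsF : fs ∈ F) :
    (∀ f ∈ F, Measurable f →
      ∫ p, ((if f p.1 ≠ p.2 then (1 : ℝ) else 0) - (if fs p.1 ≠ p.2 then 1 else 0)) ^ 2 ∂μ
        ≤ (1 / h) *
          ∫ p, ((if f p.1 ≠ p.2 then (1 : ℝ) else 0) - (if fs p.1 ≠ p.2 then 1 else 0)) ∂μ) ∧
    (μ {p : X × ℝ | fs p.1 ≠ p.2}).toReal ≤ (1 - h) / 2 :=
  massart_bernstein_general μ h hh hh1 η hη hcond hlabel hmargin fs hfs F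
end

section
/- Global-to-local entropy with cover decomposition: let V ⊆ {0,1}^n be the set of value vectors of a binary-valued function class G on points X_1,...,X_n, let N_γ ⊆ V be a minimal γ-cover of V in Hamming distance, let p(v) denote a nearest element of N_γ to v, and let c ∈ [0,1]. Then for Rademacher variables ε_1,...,ε_n, E_ε[max_{v∈V} Σ_i (ε_i v_i − c v_i)] ≤ E_ε[max_{v∈V} Σ_i ε_i (v_i − p(v)_i)] + max_{v∈V} Σ_i ((c/4)p(v)_i − c v_i) + E_ε[max_{v∈V} Σ_i (ε_i p(v)_i − (c/4)p(v)_i)], and consequently (1/n)E_ε[max_{v∈V}Σ_i(ε_i v_i − c v_i)] ≤ (1 + c/4)γ/n + (2/c)·log(M_1(V,γ))/n, where M_1(V,γ) is the maximal γ-packing number of V. -/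
open Finset

/-- Maximal `γ`-packing number of a finite set `V` of vectors (pairwise Hamming distance
strictly greater than `γ`). -/
noncomputable def packNum (n : ℕ) (V : Finset (Fin n → ℝ)) (γ : ℕ) : ℕ :=
  sSup {k : ℕ | ∃ T ⊆ V, T.card = k ∧
    ∀ v ∈ T, ∀ w ∈ T, v ≠ w → γ < (Finset.univ.filter fun i => v i ≠ w i).card}

/-!
For every sign vector `ε`, the objective `∑ᵢ (εᵢ vᵢ - c vᵢ)` splits as the Rademacher sum of
`v - p v`, the offset `∑ᵢ (c/4 · (p v)ᵢ - c vᵢ)` and the offset Rademacher sum at `p v`; the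
maximum of a sum is at most the sum of the maxima. Since the vectors are `0/1`-valued, the first
two pieces are bounded through the Hamming distance `d(v, p v) ≤ γ`. For the third, `p v` ranges
over `Nγ`, and with `λ = c/2` every `w ∈ [0,1]ⁿ` satisfies
`𝔼 exp (λ ∑ᵢ (εᵢ wᵢ - c/4 · wᵢ)) ≤ 1`, because
`cosh (λ x) ≤ exp (λ² x² / 2) ≤ exp (λ c x / 4)` for `x ∈ [0,1]`;
Jensen's inequality and a union bound give `(2/c) log |Nγ|`. Finally a maximal `γ`-packing is a
`γ`-cover, so a minimal cover is no larger than `M₁(V, γ)`.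
-/

open Real
open scoped BigOperators

theorem Real.exp_expect_le_expect_exp {ι : Type*} {s : Finset ι} (hs : s.Nonempty)
    (f : ι → ℝ) : exp (𝔼 i ∈ s, f i) ≤ 𝔼 i ∈ s, exp (f i) := by
  have hcard : (0 : ℝ) < #s := by exact_mod_cast hs.card_pos
  simp only [expect_eq_sum_div_card, div_eq_inv_mul, mul_sum]
  simpa only [smul_eq_mul] using convexOn_exp.map_sum_le (fun _ _ => by positivity)
    (by simp [hcard.ne']) (fun i _ => Set.mem_univ (f i))

theorem expect_sup'_le_log_card_div {Ω ι : Type*} [Fintype Ω] [Nonempty Ω] {N : Finset ι}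
    (hN : N.Nonempty) (f : Ω → ι → ℝ) {t : ℝ} (ht : 0 < t)
    (hmgf : ∀ w ∈ N, 𝔼 ω, exp (t * f ω w) ≤ 1) :
    𝔼 ω, N.sup' hN (f ω) ≤ log #N / t := by
  have hsup : ∀ ω, exp (t * N.sup' hN (f ω)) ≤ ∑ w ∈ N, exp (t * f ω w) := fun ω => by
    obtain ⟨w, hw, hmax⟩ := exists_mem_eq_sup' hN (f ω)
    rw [hmax]
    exact single_le_sum (f := fun w => exp (t * f ω w)) (fun _ _ => (exp_pos _).le) hw
  have hexp : exp (t * 𝔼 ω, N.sup' hN (f ω)) ≤ #N :=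
    calc exp (t * 𝔼 ω, N.sup' hN (f ω)) = exp (𝔼 ω, t * N.sup' hN (f ω)) := by
          rw [mul_expect]
      _ ≤ 𝔼 ω, exp (t * N.sup' hN (f ω)) := exp_expect_le_expect_exp univ_nonempty _
      _ ≤ 𝔼 ω, ∑ w ∈ N, exp (t * f ω w) := expect_le_expect fun ω _ => hsup ω
      _ = ∑ w ∈ N, 𝔼 ω, exp (t * f ω w) := expect_sum_comm _ _ _
      _ ≤ ∑ _w ∈ N, (1 : ℝ) := sum_le_sum hmgf
      _ = #N := by simp
  rw [le_div_iff₀ ht, mul_comm]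
  exact (le_log_iff_exp_le (by exact_mod_cast hN.card_pos)).2 hexp

theorem exp_mul_offset_sign_add_le_two (c x : ℝ) (hx0 : 0 ≤ x) (hx1 : x ≤ 1) :
    exp (c / 2 * (x - c / 4 * x)) + exp (c / 2 * (-x - c / 4 * x)) ≤ 2 := by
  have hcosh : exp (c / 2 * (x - c / 4 * x)) + exp (c / 2 * (-x - c / 4 * x))
      = 2 * cosh (c * x / 2) * exp (-(c ^ 2 * x / 8)) := by
    rw [cosh_eq, mul_div_cancel₀ _ two_ne_zero, add_mul, ← exp_add, ← exp_add]
    ring_nf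
  have hexponent : c ^ 2 * (x ^ 2 - x) / 8 ≤ 0 :=
    div_nonpos_of_nonpos_of_nonneg
      (mul_nonpos_of_nonneg_of_nonpos (sq_nonneg c) (by nlinarith)) (by norm_num)
  calc _ = 2 * cosh (c * x / 2) * exp (-(c ^ 2 * x / 8)) := hcosh
    _ ≤ 2 * exp ((c * x / 2) ^ 2 / 2) * exp (-(c ^ 2 * x / 8)) := by
      gcongr; exact cosh_le_exp_half_sq _
    _ = 2 * exp (c ^ 2 * (x ^ 2 - x) / 8) := by
      rw [mul_assoc, ← exp_add]; ring_nf
    _ ≤ 2 := by simpa using exp_le_one_iff.2 hexponent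

section UnitCube

variable {ι : Type*} [Fintype ι]

theorem expect_exp_offset_rademacher_le_one [DecidableEq ι] (c : ℝ) {w : ι → ℝ}
    (hw : ∀ i, w i ∈ Set.Icc (0 : ℝ) 1) :
    𝔼 σ : ι → Bool,
      exp (c / 2 * ∑ i, ((if σ i then 1 else -1) * w i - c / 4 * w i)) ≤ 1 := by
  let g (i : ι) (b : Bool) : ℝ := exp (c / 2 * ((if b then 1 else -1) * w i - c / 4 * w i))
  have hprod : ∑ σ : ι → Bool,
      exp (c / 2 * ∑ i, ((if σ i then 1 else -1) * w i - c / 4 * w i)) = ∏ i, ∑ b, g i b := by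
    simp only [mul_sum, exp_sum]
    exact (Fintype.prod_sum g).symm
  rw [Fintype.expect_eq_sum_div_card, hprod, div_le_one (by positivity)]
  calc _ ≤ ∏ _i : ι, (2 : ℝ) := by
        refine prod_le_prod (fun i _ => sum_nonneg fun _ _ => (exp_pos _).le) fun i _ => ?_
        simpa [g, Fintype.sum_bool] using
          exp_mul_offset_sign_add_le_two c (w i) (hw i).1 (hw i).2
    _ = Fintype.card (ι → Bool) := by simp

theorem sum_abs_sub_le_hammingDist {v w : ι → ℝ}
    (hv : ∀ i, v i ∈ Set.Icc (0 : ℝ) 1) (hw : ∀ i, w i ∈ Set.Icc (0 : ℝ) 1) :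
    ∑ i, |v i - w i| ≤ hammingDist v w :=
  calc ∑ i, |v i - w i| ≤ ∑ i, if v i ≠ w i then (1 : ℝ) else 0 := by
        refine sum_le_sum fun i _ => ?_
        split_ifs with h
        · exact abs_sub_le_iff.2
            ⟨by linarith [(hv i).2, (hw i).1], by linarith [(hv i).1, (hw i).2]⟩
        · simp_all
    _ = hammingDist v w := by rw [sum_boole]; rfl

theorem sum_sign_mul_le_sum_abs (σ : ι → Bool) (x : ι → ℝ) :
    ∑ i, (if σ i then 1 else -1) * x i ≤ ∑ i, |x i| :=
  sum_le_sum fun i _ => by split_ifs <;> simp [le_abs_self, neg_le_abs]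

theorem sum_offset_le_hammingDist {c : ℝ} (hc : 0 ≤ c) {v w : ι → ℝ}
    (hv : ∀ i, v i ∈ Set.Icc (0 : ℝ) 1) (hw : ∀ i, w i ∈ Set.Icc (0 : ℝ) 1) :
    ∑ i, (c / 4 * w i - c * v i) ≤ c / 4 * hammingDist v w :=
  calc ∑ i, (c / 4 * w i - c * v i) ≤ ∑ i, c / 4 * |v i - w i| := by
        refine sum_le_sum fun i _ => ?_
        have := neg_abs_le (v i - w i)
        nlinarith [(hv i).1]
    _ ≤ c / 4 * hammingDist v w := by
        rw [← mul_sum]; gcongr; exact sum_abs_sub_le_hammingDist hv hw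

variable {V : Finset (ι → ℝ)} (hV : V.Nonempty) {p : (ι → ℝ) → ι → ℝ}

theorem expect_sup'_sign_mul_sub_le [DecidableEq ι] {γ : ℕ}
    (hunit : ∀ v ∈ V, ∀ i, v i ∈ Set.Icc (0 : ℝ) 1) (hpV : ∀ v ∈ V, p v ∈ V)
    (hdist : ∀ v ∈ V, hammingDist v (p v) ≤ γ) :
    𝔼 σ : ι → Bool, V.sup' hV (fun v => ∑ i, (if σ i then 1 else -1) * (v i - p v i))
      ≤ γ :=
  expect_le univ_nonempty fun σ _ => sup'_le _ _ fun v hv =>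
    calc _ ≤ ∑ i, |v i - p v i| := sum_sign_mul_le_sum_abs σ _
      _ ≤ hammingDist v (p v) := sum_abs_sub_le_hammingDist (hunit v hv) (hunit _ (hpV v hv))
      _ ≤ γ := by exact_mod_cast hdist v hv

theorem sup'_offset_le {γ : ℕ} {c : ℝ} (hc : 0 ≤ c)
    (hunit : ∀ v ∈ V, ∀ i, v i ∈ Set.Icc (0 : ℝ) 1) (hpV : ∀ v ∈ V, p v ∈ V)
    (hdist : ∀ v ∈ V, hammingDist v (p v) ≤ γ) :
    V.sup' hV (fun v => ∑ i, (c / 4 * p v i - c * v i)) ≤ c / 4 * γ :=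
  sup'_le _ _ fun v hv =>
    (sum_offset_le_hammingDist hc (hunit v hv) (hunit _ (hpV v hv))).trans
      (by gcongr; exact_mod_cast hdist v hv)

theorem expect_sup'_offset_comp_le [DecidableEq ι] {N : Finset (ι → ℝ)}
    (hNunit : ∀ w ∈ N, ∀ i, w i ∈ Set.Icc (0 : ℝ) 1) (hp : ∀ v ∈ V, p v ∈ N)
    {c : ℝ} (hc : 0 < c) :
    𝔼 σ : ι → Bool,
      V.sup' hV (fun v => ∑ i, ((if σ i then 1 else -1) * p v i - c / 4 * p v i))
        ≤ 2 / c * log #N := by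
  let f (σ : ι → Bool) (w : ι → ℝ) : ℝ :=
    ∑ i, ((if σ i then 1 else -1) * w i - c / 4 * w i)
  have hN : N.Nonempty := let ⟨v, hv⟩ := hV; ⟨p v, hp v hv⟩
  calc _ ≤ 𝔼 σ, N.sup' hN (f σ) :=
        expect_le_expect fun σ _ => sup'_le _ _ fun v hv => le_sup' (f σ) (hp v hv)
    _ ≤ log #N / (c / 2) := expect_sup'_le_log_card_div hN f (by positivity) fun w hw =>
        expect_exp_offset_rademacher_le_one c (hNunit w hw)
    _ = 2 / c * log #N := by ring

end UnitCube

theorem expect_sup'_le_of_le_add_add {Ω ι : Type*} [Fintype Ω] [Nonempty Ω] {s : Finset ι}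
    (hs : s.Nonempty) {F a c : Ω → ι → ℝ} {b : ι → ℝ}
    (h : ∀ ω, ∀ v ∈ s, F ω v ≤ a ω v + b v + c ω v) :
    𝔼 ω, s.sup' hs (F ω)
      ≤ 𝔼 ω, s.sup' hs (a ω) + s.sup' hs b + 𝔼 ω, s.sup' hs (c ω) := by
  rw [← Fintype.expect_const (ι := Ω) (s.sup' hs b), ← expect_add_distrib,
    ← expect_add_distrib]
  refine expect_le_expect fun ω _ => sup'_le _ _ fun v hv => (h ω v hv).trans ?_
  gcongr <;> exact le_sup' _ hv

theorem sum_offset_eq_split {ι : Type*} [Fintype ι] (s v w : ι → ℝ) (c : ℝ) :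
    ∑ i, (s i * v i - c * v i) = ∑ i, s i * (v i - w i) + ∑ i, (c / 4 * w i - c * v i) +
      ∑ i, (s i * w i - c / 4 * w i) := by
  simp only [← sum_add_distrib]
  exact sum_congr rfl fun i _ => by ring

theorem exists_packing_covering {ι β : Type*} [Fintype ι] [DecidableEq β] (γ : ℕ)
    (V : Finset (ι → β)) :
    ∃ T ⊆ V, (∀ v ∈ T, ∀ w ∈ T, v ≠ w → γ < hammingDist v w) ∧
      ∀ v ∈ V, ∃ w ∈ T, hammingDist v w ≤ γ := by
  classical
  let IsPacking (T : Finset (ι → β)) : Prop :=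
    ∀ v ∈ T, ∀ w ∈ T, v ≠ w → γ < hammingDist v w
  obtain ⟨T, hT, hmax⟩ := (V.powerset.filter IsPacking).exists_max_image card
    ⟨∅, by simp [IsPacking]⟩
  rw [mem_filter, mem_powerset] at hT
  refine ⟨T, hT.1, hT.2, fun v hv => ?_⟩
  by_contra! hfar
  have hvT : v ∉ T := fun h => by simpa using hfar v h
  have hins : IsPacking (insert v T) := by
    intro a ha b hb hab
    rcases mem_insert.1 ha with rfl | haT <;> rcases mem_insert.1 hb with rfl | hbT
    · exact absurd rfl hab
    · exact hfar b hbT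
    · exact hammingDist_comm a b ▸ hfar a haT
    · exact hT.2 a haT b hbT hab
  have := hmax _ (mem_filter.2 ⟨mem_powerset.2 (insert_subset hv hT.1), hins⟩)
  rw [card_insert_of_notMem hvT] at this
  omega

theorem card_le_packNum {n γ : ℕ} {V Nγ : Finset (Fin n → ℝ)}
    (hmin : ∀ N' ⊆ V, (∀ v ∈ V, ∃ w ∈ N', hammingDist v w ≤ γ) → #Nγ ≤ #N') :
    #Nγ ≤ packNum n V γ := by
  obtain ⟨T, hTV, hpack, hcov⟩ := exists_packing_covering γ V
  refine (hmin T hTV hcov).trans (le_csSup ⟨#V, ?_⟩ ⟨T, hTV, rfl, hpack⟩)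
  rintro k ⟨T', hT', rfl, -⟩
  exact card_le_card hT'

theorem inv_two_pow_mul_sum_eq_expect (n : ℕ) (f : (Fin n → Bool) → ℝ) :
    (2 ^ n : ℝ)⁻¹ * ∑ σ, f σ = 𝔼 σ, f σ := by
  simp [Fintype.expect_eq_sum_div_card, div_eq_inv_mul]

theorem cover_decomposition_general (n : ℕ) (γ : ℕ)
    (V : Finset (Fin n → ℝ)) (hV : V.Nonempty)
    (h01 : ∀ v ∈ V, ∀ i, v i = 0 ∨ v i = 1)
    (Nγ : Finset (Fin n → ℝ)) (hNV : Nγ ⊆ V)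
    (hmin : ∀ N' : Finset (Fin n → ℝ), N' ⊆ V →
      (∀ v ∈ V, ∃ w ∈ N', (Finset.univ.filter fun i => v i ≠ w i).card ≤ γ) →
      Nγ.card ≤ N'.card)
    (p : (Fin n → ℝ) → (Fin n → ℝ))
    (hpmem : ∀ v ∈ V, p v ∈ Nγ)
    (hpdist : ∀ v ∈ V, (Finset.univ.filter fun i => v i ≠ p v i).card ≤ γ)
    (c : ℝ) (hc0 : 0 < c) :
    ((2 ^ n : ℝ)⁻¹ * ∑ σ : Fin n → Bool, V.sup' hV fun v =>
        ∑ i, ((if σ i then (1 : ℝ) else -1) * v i - c * v i)) ≤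
      ((2 ^ n : ℝ)⁻¹ * ∑ σ : Fin n → Bool, V.sup' hV fun v =>
          ∑ i, (if σ i then (1 : ℝ) else -1) * (v i - p v i)) +
        (V.sup' hV fun v => ∑ i, ((c / 4) * p v i - c * v i)) +
        ((2 ^ n : ℝ)⁻¹ * ∑ σ : Fin n → Bool, V.sup' hV fun v =>
          ∑ i, ((if σ i then (1 : ℝ) else -1) * p v i - (c / 4) * p v i)) ∧
    (1 / n : ℝ) * ((2 ^ n : ℝ)⁻¹ * ∑ σ : Fin n → Bool, V.sup' hV fun v =>
        ∑ i, ((if σ i then (1 : ℝ) else -1) * v i - c * v i)) ≤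
      (1 + c / 4) * γ / n + (2 / c) * Real.log (packNum n V γ) / n := by
  simp only [inv_two_pow_mul_sum_eq_expect]
  have hunit : ∀ v ∈ V, ∀ i, v i ∈ Set.Icc (0 : ℝ) 1 := fun v hv i => by
    rcases h01 v hv i with h | h <;> simp [h]
  have hpV : ∀ v ∈ V, p v ∈ V := fun v hv => hNV (hpmem v hv)
  have hsplit := expect_sup'_le_of_le_add_add hV fun (σ : Fin n → Bool) v _ =>
    (sum_offset_eq_split (fun i => if σ i then (1 : ℝ) else -1) v (p v) c).le
  refine ⟨hsplit, ?_⟩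
  have happrox := expect_sup'_sign_mul_sub_le hV hunit hpV hpdist
  have hoffset := sup'_offset_le hV hc0.le hunit hpV hpdist
  have hnet := expect_sup'_offset_comp_le hV (fun w hw => hunit w (hNV hw)) hpmem hc0
  have hNγ : 0 < #Nγ := let ⟨v, hv⟩ := hV; card_pos.2 ⟨p v, hpmem v hv⟩
  have hpack : log #Nγ ≤ log (packNum n V γ) :=
    log_le_log (by exact_mod_cast hNγ) (by exact_mod_cast card_le_packNum hmin)
  calc _ ≤ (1 / n : ℝ) * (γ + c / 4 * γ + 2 / c * log (packNum n V γ)) := by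
        gcongr
        linarith [mul_le_mul_of_nonneg_left hpack (by positivity : 0 ≤ 2 / c)]
    _ = _ := by ring

theorem cover_decomposition (n : ℕ) (hn : 0 < n) (γ : ℕ)
    (V : Finset (Fin n → ℝ)) (hV : V.Nonempty)
    (h01 : ∀ v ∈ V, ∀ i, v i = 0 ∨ v i = 1)
    (Nγ : Finset (Fin n → ℝ)) (hNV : Nγ ⊆ V)
    (hcover : ∀ v ∈ V, ∃ w ∈ Nγ, (Finset.univ.filter fun i => v i ≠ w i).card ≤ γ)
    (hmin : ∀ N' : Finset (Fin n → ℝ), N' ⊆ V →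
      (∀ v ∈ V, ∃ w ∈ N', (Finset.univ.filter fun i => v i ≠ w i).card ≤ γ) →
      Nγ.card ≤ N'.card)
    (p : (Fin n → ℝ) → (Fin n → ℝ))
    (hpmem : ∀ v ∈ V, p v ∈ Nγ)
    (hpdist : ∀ v ∈ V, (Finset.univ.filter fun i => v i ≠ p v i).card ≤ γ)
    (hpnear : ∀ v ∈ V, ∀ w ∈ Nγ,
      (Finset.univ.filter fun i => v i ≠ p v i).card ≤
        (Finset.univ.filter fun i => v i ≠ w i).card)
    (c : ℝ) (hc0 : 0 < c) (hc1 : c ≤ 1) :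
    ((2 ^ n : ℝ)⁻¹ * ∑ σ : Fin n → Bool, V.sup' hV fun v =>
        ∑ i, ((if σ i then (1 : ℝ) else -1) * v i - c * v i)) ≤
      ((2 ^ n : ℝ)⁻¹ * ∑ σ : Fin n → Bool, V.sup' hV fun v =>
          ∑ i, (if σ i then (1 : ℝ) else -1) * (v i - p v i)) +
        (V.sup' hV fun v => ∑ i, ((c / 4) * p v i - c * v i)) +
        ((2 ^ n : ℝ)⁻¹ * ∑ σ : Fin n → Bool, V.sup' hV fun v =>
          ∑ i, ((if σ i then (1 : ℝ) else -1) * p v i - (c / 4) * p v i)) ∧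
    (1 / n : ℝ) * ((2 ^ n : ℝ)⁻¹ * ∑ σ : Fin n → Bool, V.sup' hV fun v =>
        ∑ i, ((if σ i then (1 : ℝ) else -1) * v i - c * v i)) ≤
      (1 + c / 4) * γ / n + (2 / c) * Real.log (packNum n V γ) / n :=
  cover_decomposition_general n γ V hV h01 Nγ hNV hmin p hpmem hpdist c hc0
end

section
/- Realizable-case in-expectation bound via shifted process: in the realizable case (Y = f*(X) a.s., f* ∈ F), for any empirical risk minimizer f̂ over n i.i.d. samples and any c > 0, E[R(f̂)] ≤ E[ sup_{g ∈ G_{f*}} (P g − (1+c) P_n g) ] ≤ (2(1+c/2)²/c) · log(S_F(n))/n, where G_{f*} = { x ↦ 1[f(x) ≠ f*(x)] : f ∈ F } and S_F is the growth function. -/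
open MeasureTheory Finset

/-- The growth function of a class of binary classifiers. -/
noncomputable def growthFn {X : Type*} (F : Set (X → Bool)) (m : ℕ) : ℕ :=
  sSup {k : ℕ | ∃ x : Fin m → X, k = Set.ncard ((fun f => f ∘ x) '' F)}

/-!
Since `f̂` fits the sample, `R(f̂) = R(f̂) - (1 + c) Pₙ ĝ` is one of the terms of the shifted
supremum. Replacing `P g` by the empirical mean over a ghost sample and swapping sample and ghost
points according to random signs `εᵢ` leaves the expectation unchanged. As `(v - u)² ≤ u + v` on
`[0, 1]`, half of the shift turns each swapped term into an offset Rademacher term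
`(1 + c/2) εᵢ dᵢ - (c/2) dᵢ²`, where `dᵢ` is the difference of the two losses. At
`λ = c / (1 + c/2)²` the sign-averaged exponential moment of each offset sum is at most `1`
(since `cosh x ≤ exp (x²/2)`), so soft-max and Jensen bound the expected supremum over the at most
`S_F(n)²` loss patterns on the `2n` points by `(1 + c/2)²/c · log S_F(n)² / n`.
-/

def boolSign (β : Bool) : ℝ := if β then -1 else 1

lemma exp_sub_add_exp_neg_sub_le_two {x y : ℝ} (h : x ^ 2 / 2 ≤ y) :
    Real.exp (x - y) + Real.exp (-x - y) ≤ 2 := by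
  calc Real.exp (x - y) + Real.exp (-x - y) = 2 * Real.cosh x * Real.exp (-y) := by
        rw [Real.cosh_eq, sub_eq_add_neg, sub_eq_add_neg (-x), Real.exp_add, Real.exp_add]; ring
    _ ≤ 2 * Real.exp (x ^ 2 / 2) * Real.exp (-y) := by gcongr; exact Real.cosh_le_exp_half_sq x
    _ = 2 * Real.exp (x ^ 2 / 2 - y) := by rw [mul_assoc, ← Real.exp_add, sub_eq_add_neg]
    _ ≤ 2 * 1 := by gcongr; exact Real.exp_le_one_iff.2 (by linarith)
    _ = 2 := mul_one 2

lemma sum_exp_offset_le_two_pow {ι : Type*} [Fintype ι] [DecidableEq ι] (v : ι → ℝ)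
    {L a b : ℝ} (hL : L * a ^ 2 = 2 * b) :
    ∑ ε : ι → Bool, Real.exp (L * ∑ i, (a * boolSign (ε i) * v i - b * v i ^ 2)) ≤
      2 ^ Fintype.card ι := by
  have hcoord : ∀ i, ∑ β : Bool, Real.exp (L * (a * boolSign β * v i - b * v i ^ 2)) ≤ 2 := by
    intro i
    have hxy : (L * a * v i) ^ 2 / 2 = L * b * v i ^ 2 := by
      linear_combination (L * v i ^ 2 / 2) * hL
    calc ∑ β : Bool, Real.exp (L * (a * boolSign β * v i - b * v i ^ 2))
        = Real.exp (L * a * v i - L * b * v i ^ 2) +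
            Real.exp (-(L * a * v i) - L * b * v i ^ 2) := by
          rw [Fintype.sum_bool, add_comm]
          simp only [boolSign, if_true, Bool.false_eq_true, if_false]
          ring_nf
      _ ≤ 2 := exp_sub_add_exp_neg_sub_le_two hxy.le
  calc ∑ ε : ι → Bool, Real.exp (L * ∑ i, (a * boolSign (ε i) * v i - b * v i ^ 2))
      = ∏ i, ∑ β : Bool, Real.exp (L * (a * boolSign β * v i - b * v i ^ 2)) := by
        rw [Fintype.prod_sum]
        simp only [Finset.mul_sum, Real.exp_sum]
    _ ≤ ∏ _i : ι, (2 : ℝ) :=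
        Finset.prod_le_prod (fun i _ => Finset.sum_nonneg fun _ _ => (Real.exp_pos _).le)
          fun i _ => hcoord i
    _ = 2 ^ Fintype.card ι := by rw [Finset.prod_const, Finset.card_univ]

lemma sup'_le_inv_mul_log_sum_exp {ι : Type*} (s : Finset ι) (hs : s.Nonempty) (f : ι → ℝ)
    {L : ℝ} (hL : 0 < L) : s.sup' hs f ≤ L⁻¹ * Real.log (∑ i ∈ s, Real.exp (L * f i)) := by
  obtain ⟨i, hi, hmax⟩ := s.exists_mem_eq_sup' hs f
  have hexp : Real.exp (L * f i) ≤ ∑ j ∈ s, Real.exp (L * f j) :=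
    Finset.single_le_sum (f := fun j => Real.exp (L * f j)) (fun _ _ => (Real.exp_pos _).le) hi
  have hlog : L * f i ≤ Real.log (∑ j ∈ s, Real.exp (L * f j)) := by
    simpa only [Real.log_exp] using Real.log_le_log (Real.exp_pos _) hexp
  rwa [hmax, le_inv_mul_iff₀ hL]

lemma sum_log_le_card_mul_log_avg {κ : Type*} [Fintype κ] [Nonempty κ] (S : κ → ℝ)
    (hS : ∀ k, 0 < S k) :
    ∑ k, Real.log (S k) ≤ Fintype.card κ * Real.log ((Fintype.card κ : ℝ)⁻¹ * ∑ k, S k) := by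
  have hcard : (0 : ℝ) < Fintype.card κ := by exact_mod_cast Fintype.card_pos
  have hJensen := strictConcaveOn_log_Ioi.concaveOn.le_map_sum (t := Finset.univ)
    (w := fun _ => (Fintype.card κ : ℝ)⁻¹) (p := S) (fun _ _ => by positivity)
    (by simp [Finset.card_univ, hcard.ne']) (fun k _ => hS k)
  simp only [smul_eq_mul, ← Finset.mul_sum] at hJensen
  rwa [inv_mul_le_iff₀ hcard] at hJensen

theorem sum_sup'_offset_le {ι : Type*} [Fintype ι] [DecidableEq ι]
    (V : Finset (ι → ℝ)) (hV : V.Nonempty) {a b : ℝ} (ha : a ≠ 0) (hb : 0 < b) :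
    ∑ ε : ι → Bool, V.sup' hV (fun v => ∑ i, (a * boolSign (ε i) * v i - b * v i ^ 2)) ≤
      2 ^ Fintype.card ι * (a ^ 2 / (2 * b) * Real.log V.card) := by
  set L := 2 * b / a ^ 2
  have hL : 0 < L := by positivity
  have hLa : L * a ^ 2 = 2 * b := by simp only [L]; field_simp
  set S : (ι → Bool) → ℝ := fun ε =>
    ∑ v ∈ V, Real.exp (L * ∑ i, (a * boolSign (ε i) * v i - b * v i ^ 2))
  have hS : ∀ ε, 0 < S ε := fun ε => Finset.sum_pos (fun _ _ => Real.exp_pos _) hV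
  have hcard : (Fintype.card (ι → Bool) : ℝ) = 2 ^ Fintype.card ι := by simp
  have hsumS : (2 ^ Fintype.card ι : ℝ)⁻¹ * ∑ ε, S ε ≤ V.card := by
    rw [inv_mul_le_iff₀ (by positivity), Finset.sum_comm]
    calc ∑ v ∈ V, ∑ ε : ι → Bool, Real.exp (L * ∑ i, (a * boolSign (ε i) * v i - b * v i ^ 2))
        ≤ ∑ _v ∈ V, (2 : ℝ) ^ Fintype.card ι :=
          Finset.sum_le_sum fun v _ => sum_exp_offset_le_two_pow v hLa
      _ = 2 ^ Fintype.card ι * V.card := by rw [Finset.sum_const, nsmul_eq_mul, mul_comm]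
  calc ∑ ε : ι → Bool, V.sup' hV (fun v => ∑ i, (a * boolSign (ε i) * v i - b * v i ^ 2))
      ≤ ∑ ε, L⁻¹ * Real.log (S ε) :=
        Finset.sum_le_sum fun ε _ => sup'_le_inv_mul_log_sum_exp V hV _ hL
    _ = L⁻¹ * ∑ ε, Real.log (S ε) := by rw [Finset.mul_sum]
    _ ≤ L⁻¹ * (2 ^ Fintype.card ι * Real.log ((2 ^ Fintype.card ι : ℝ)⁻¹ * ∑ ε, S ε)) := by
        gcongr
        simpa only [hcard] using sum_log_le_card_mul_log_avg S hS
    _ ≤ L⁻¹ * (2 ^ Fintype.card ι * Real.log V.card) := by gcongr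
    _ = 2 ^ Fintype.card ι * (a ^ 2 / (2 * b) * Real.log V.card) := by simp only [L]; field_simp

lemma card_image_comp_le_growthFn {X : Type*} {n : ℕ} (F : Finset (X → Bool)) (x : Fin n → X) :
    (F.image fun f => f ∘ x).card ≤ growthFn (↑F : Set (X → Bool)) n := by
  classical
  refine le_csSup ⟨F.card, ?_⟩ ⟨x, by rw [← Finset.coe_image, Set.ncard_coe_finset]⟩
  rintro k ⟨y, rfl⟩
  exact (Set.ncard_image_le F.finite_toSet).trans (Set.ncard_coe_finset F).le

lemma card_image_pair_le_growthFn_sq {X β : Type*} [DecidableEq β] {n : ℕ}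
    (F : Finset (X → Bool)) (x y : Fin n → X) (φ : (Fin n → Bool) → (Fin n → Bool) → β) :
    (F.image fun f => φ (f ∘ x) (f ∘ y)).card ≤ growthFn (↑F : Set (X → Bool)) n ^ 2 := by
  classical
  have hsub : (F.image fun f => φ (f ∘ x) (f ∘ y)) ⊆
      Finset.image₂ φ (F.image fun f => f ∘ x) (F.image fun f => f ∘ y) := by
    intro b hb
    obtain ⟨f, hf, rfl⟩ := Finset.mem_image.1 hb
    exact Finset.mem_image₂_of_mem (Finset.mem_image_of_mem _ hf) (Finset.mem_image_of_mem _ hf)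
  calc _ ≤ _ := Finset.card_le_card hsub
    _ ≤ _ := Finset.card_image₂_le _ _ _
    _ ≤ _ := Nat.mul_le_mul (card_image_comp_le_growthFn F x) (card_image_comp_le_growthFn F y)
    _ = _ := (sq _).symm

lemma log_card_image_pair_le {X β : Type*} [DecidableEq β] {n : ℕ} {F : Finset (X → Bool)}
    (hF : F.Nonempty) (x y : Fin n → X) (φ : (Fin n → Bool) → (Fin n → Bool) → β) :
    Real.log (F.image fun f => φ (f ∘ x) (f ∘ y)).card ≤
      2 * Real.log (growthFn (↑F : Set (X → Bool)) n) := by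
  rw [show 2 * Real.log (growthFn (↑F : Set (X → Bool)) n) =
    Real.log ((growthFn (↑F : Set (X → Bool)) n : ℝ) ^ 2) by rw [Real.log_pow]; norm_num]
  exact Real.log_le_log (by exact_mod_cast (hF.image _).card_pos)
    (by exact_mod_cast card_image_pair_le_growthFn_sq F x y φ)

noncomputable def empMean {α : Type*} {n : ℕ} (h : α → ℝ) (z : Fin n → α) : ℝ :=
  (n : ℝ)⁻¹ * ∑ i, h (z i)

def swapCoords {ι α : Type*} [MeasurableSpace α] (ε : ι → Bool) : (ι → α × α) ≃ᵐ (ι → α × α) :=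
  MeasurableEquiv.piCongrRight fun i =>
    if ε i then MeasurableEquiv.prodComm else MeasurableEquiv.refl (α × α)

lemma swapCoords_apply {ι α : Type*} [MeasurableSpace α] (ε : ι → Bool) (q : ι → α × α) (i : ι) :
    swapCoords ε q i = if ε i then (q i).swap else q i := by
  change (if ε i then MeasurableEquiv.prodComm else MeasurableEquiv.refl (α × α)) (q i) = _
  split_ifs <;> rfl

/-- `q i` pairs the `i`-th sample point (first component) with its ghost copy (second). -/
noncomputable def ghostShiftedSup {ι α : Type*} {n : ℕ} (s : Finset ι) (hs : s.Nonempty)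
    (g : ι → α → ℝ) (K : ℝ) (q : Fin n → α × α) : ℝ :=
  s.sup' hs fun f => empMean (g f) (Prod.snd ∘ q) - K * empMean (g f) (Prod.fst ∘ q)

lemma sub_one_add_mul_le_offset {u v c : ℝ} (hu : u ∈ Set.Icc (0 : ℝ) 1)
    (hv : v ∈ Set.Icc (0 : ℝ) 1) (hc : 0 ≤ c) :
    v - (1 + c) * u ≤ (1 + c / 2) * (v - u) - c / 2 * (v - u) ^ 2 := by
  have hsq : (v - u) ^ 2 ≤ u + v := by nlinarith [hu.1, hu.2, hv.1, hv.2]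
  nlinarith [mul_le_mul_of_nonneg_left hsq hc]

lemma empMean_swapCoords_sub_le_offset {α : Type*} [MeasurableSpace α] {n : ℕ} (g : α → ℝ)
    (hg : ∀ x, g x ∈ Set.Icc (0 : ℝ) 1) {c : ℝ} (hc : 0 ≤ c) (ε : Fin n → Bool)
    (q : Fin n → α × α) :
    empMean g (Prod.snd ∘ swapCoords ε q) - (1 + c) * empMean g (Prod.fst ∘ swapCoords ε q) ≤
      (n : ℝ)⁻¹ * ∑ i, ((1 + c / 2) * boolSign (ε i) * (g (q i).2 - g (q i).1) -
        c / 2 * (g (q i).2 - g (q i).1) ^ 2) := by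
  rw [empMean, empMean, mul_left_comm, ← mul_sub, Finset.mul_sum, ← Finset.sum_sub_distrib]
  refine mul_le_mul_of_nonneg_left (Finset.sum_le_sum fun i _ => ?_) (by positivity)
  simp only [Function.comp_apply, swapCoords_apply]
  cases ε i
  · simpa [boolSign] using sub_one_add_mul_le_offset (hg (q i).1) (hg (q i).2) hc
  · have h := sub_one_add_mul_le_offset (hg (q i).2) (hg (q i).1) hc
    simp only [boolSign, if_true, Prod.snd_swap, Prod.fst_swap]
    linarith [h, show (g (q i).1 - g (q i).2) ^ 2 = (g (q i).2 - g (q i).1) ^ 2 by ring]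

theorem sum_swapCoords_ghostShiftedSup_le {ι α : Type*} [MeasurableSpace α] {n : ℕ}
    (s : Finset ι) (hs : s.Nonempty) (g : ι → α → ℝ) (hg : ∀ f x, g f x ∈ Set.Icc (0 : ℝ) 1)
    {c : ℝ} (hc : 0 < c) (q : Fin n → α × α) :
    ∑ ε : Fin n → Bool, ghostShiftedSup s hs g (1 + c) (swapCoords ε q) ≤
      2 ^ n * ((n : ℝ)⁻¹ *
        ((1 + c / 2) ^ 2 / c * Real.log (s.image fun f i => g f (q i).2 - g f (q i).1).card)) := by
  classical
  set V := s.image fun f i => g f (q i).2 - g f (q i).1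
  have hV : V.Nonempty := hs.image _
  set offset : (Fin n → Bool) → (Fin n → ℝ) → ℝ := fun ε v =>
    ∑ i, ((1 + c / 2) * boolSign (ε i) * v i - c / 2 * v i ^ 2)
  have hterm : ∀ ε, ghostShiftedSup s hs g (1 + c) (swapCoords ε q) ≤
      (n : ℝ)⁻¹ * V.sup' hV (offset ε) := fun ε =>
    Finset.sup'_le hs _ fun f hf =>
      (empMean_swapCoords_sub_le_offset (g f) (hg f) hc.le ε q).trans <| by
        gcongr
        exact Finset.le_sup' (offset ε)
          (Finset.mem_image_of_mem (fun f i => g f (q i).2 - g f (q i).1) hf)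
  have hoffset := sum_sup'_offset_le V hV (a := 1 + c / 2) (b := c / 2) (by positivity)
    (by positivity)
  rw [Fintype.card_fin, show 2 * (c / 2) = c by ring] at hoffset
  calc _ ≤ ∑ ε, (n : ℝ)⁻¹ * V.sup' hV (offset ε) := Finset.sum_le_sum fun ε _ => hterm ε
    _ = (n : ℝ)⁻¹ * ∑ ε, V.sup' hV (offset ε) := by rw [Finset.mul_sum]
    _ ≤ (n : ℝ)⁻¹ * (2 ^ n * ((1 + c / 2) ^ 2 / c * Real.log V.card)) := by gcongr
    _ = _ := by ring

lemma integrable_finset_sup' {β ι : Type*} {_ : MeasurableSpace β} {ν : Measure β}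
    (s : Finset ι) (hs : s.Nonempty) {f : ι → β → ℝ} (hf : ∀ i ∈ s, Integrable (f i) ν) :
    Integrable (fun x => s.sup' hs fun i => f i x) ν := by
  simpa only [← Finset.sup'_apply] using
    Finset.sup'_induction hs f (p := fun g : β → ℝ => Integrable g ν)
      (fun _ h₁ _ h₂ => h₁.sup h₂) hf

section Sampling

variable {α : Type*} [MeasurableSpace α] {μ : Measure α} {n : ℕ}

lemma integrable_empMean [IsFiniteMeasure μ] {h : α → ℝ} (hh : Integrable h μ) :
    Integrable (empMean h) (Measure.pi fun _ : Fin n => μ) :=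
  (integrable_finsetSum _ fun _ _ => integrable_comp_eval hh).const_mul _

lemma integral_empMean [IsProbabilityMeasure μ] (hn : n ≠ 0) {h : α → ℝ} (hh : Integrable h μ) :
    ∫ z, empMean h z ∂(Measure.pi fun _ : Fin n => μ) = ∫ x, h x ∂μ := by
  have heval : ∀ i : Fin n, ∫ z, h (z i) ∂(Measure.pi fun _ : Fin n => μ) = ∫ x, h x ∂μ :=
    fun i => integral_comp_eval (μ := fun _ => μ) hh.aestronglyMeasurable
  unfold empMean
  rw [integral_const_mul, integral_finsetSum _ fun i _ => integrable_comp_eval hh]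
  simp only [heval, Finset.sum_const, Finset.card_univ, Fintype.card_fin, nsmul_eq_mul]
  field_simp

lemma integrable_ghostShiftedSup [IsFiniteMeasure μ] {ι : Type*} (s : Finset ι)
    (hs : s.Nonempty) {g : ι → α → ℝ} (hg : ∀ f ∈ s, Integrable (g f) μ) (K : ℝ) :
    Integrable (ghostShiftedSup (n := n) s hs g K) (Measure.pi fun _ => μ.prod μ) :=
  integrable_finset_sup' s hs fun f hf =>
    (integrable_empMean ((hg f hf).comp_snd μ)).sub
      ((integrable_empMean ((hg f hf).comp_fst μ)).const_mul K)

theorem integral_sup'_le_integral_ghostShiftedSup [IsProbabilityMeasure μ] (hn : n ≠ 0)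
    {ι : Type*} (s : Finset ι) (hs : s.Nonempty) {g : ι → α → ℝ}
    (hg : ∀ f ∈ s, Integrable (g f) μ) (K : ℝ) :
    ∫ z, s.sup' hs (fun f => ∫ x, g f x ∂μ - K * empMean (g f) z)
        ∂(Measure.pi fun _ : Fin n => μ) ≤
      ∫ q, ghostShiftedSup (n := n) s hs g K q ∂(Measure.pi fun _ => μ.prod μ) := by
  set μn := Measure.pi fun _ : Fin n => μ
  set Ψ : (Fin n → α) × (Fin n → α) → ℝ := fun p =>
    s.sup' hs fun f => empMean (g f) p.2 - K * empMean (g f) p.1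
  have hmp := measurePreserving_arrowProdEquivProdArrow α α (Fin n) (fun _ => μ) (fun _ => μ)
  have hΨ : Integrable Ψ (μn.prod μn) :=
    (hmp.integrable_comp_emb (MeasurableEquiv.measurableEmbedding _)).1
      (integrable_ghostShiftedSup s hs hg K)
  rw [show ∫ q, ghostShiftedSup s hs g K q ∂(Measure.pi fun _ => μ.prod μ) = ∫ p, Ψ p ∂(μn.prod μn)
    from hmp.integral_comp' Ψ, integral_prod Ψ hΨ]
  refine integral_mono (integrable_finset_sup' s hs fun f hf =>
    (integrable_const _).sub ((integrable_empMean (hg f hf)).const_mul K))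
    hΨ.integral_prod_left fun z => Finset.sup'_le hs _ fun f hf => ?_
  have hsection : Integrable (fun z' => Ψ (z, z')) μn :=
    integrable_finset_sup' s hs fun f hf =>
      (integrable_empMean (hg f hf)).sub (integrable_const (K * empMean (g f) z))
  calc ∫ x, g f x ∂μ - K * empMean (g f) z
      = ∫ z', (empMean (g f) z' - K * empMean (g f) z) ∂μn := by
        rw [integral_sub (integrable_empMean (hg f hf)) (integrable_const _),
          integral_empMean hn (hg f hf), integral_const, probReal_univ, one_smul]
    _ ≤ ∫ z', Ψ (z, z') ∂μn := integral_mono ((integrable_empMean (hg f hf)).sub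
        (integrable_const _)) hsection fun z' =>
          Finset.le_sup' (fun f => empMean (g f) z' - K * empMean (g f) z) hf

lemma measurePreserving_swapCoords {ι : Type*} [Fintype ι] [SigmaFinite μ] (ε : ι → Bool) :
    MeasurePreserving (swapCoords ε) (Measure.pi fun _ : ι => μ.prod μ)
      (Measure.pi fun _ : ι => μ.prod μ) := by
  convert measurePreserving_pi (fun _ : ι => μ.prod μ) (fun _ => μ.prod μ)
    (f := fun i => if ε i then Prod.swap else id) (fun i => ?_) using 1
  · funext q i
    rw [swapCoords_apply]
    split_ifs <;> rfl
  · split_ifs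
    · exact Measure.measurePreserving_swap
    · exact MeasurePreserving.id _

theorem integral_le_of_sum_swapCoords_le {ι : Type*} [Fintype ι] [DecidableEq ι]
    [IsProbabilityMeasure μ] {Φ : (ι → α × α) → ℝ}
    (hΦ : Integrable Φ (Measure.pi fun _ => μ.prod μ)) {K : ℝ}
    (hK : ∀ q, ∑ ε : ι → Bool, Φ (swapCoords ε q) ≤ 2 ^ Fintype.card ι * K) :
    ∫ q, Φ q ∂(Measure.pi fun _ => μ.prod μ) ≤ K := by
  set ν := Measure.pi fun _ : ι => μ.prod μ
  have hswap : ∀ ε : ι → Bool, Integrable (fun q => Φ (swapCoords ε q)) ν := fun ε =>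
    (measurePreserving_swapCoords ε).integrable_comp_of_integrable hΦ
  have hsum : ∫ q, ∑ ε : ι → Bool, Φ (swapCoords ε q) ∂ν = 2 ^ Fintype.card ι * ∫ q, Φ q ∂ν := by
    rw [integral_finsetSum _ fun ε _ => hswap ε,
      Finset.sum_congr rfl fun ε _ => (measurePreserving_swapCoords ε).integral_comp' Φ,
      Finset.sum_const, Finset.card_univ, Fintype.card_fun, Fintype.card_bool, nsmul_eq_mul,
      Nat.cast_pow, Nat.cast_ofNat]
  have hle : ∫ q, ∑ ε : ι → Bool, Φ (swapCoords ε q) ∂ν ≤ 2 ^ Fintype.card ι * K := by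
    simpa using integral_mono (integrable_finsetSum _ fun ε _ => hswap ε) (integrable_const _) hK
  exact le_of_mul_le_mul_left (hsum ▸ hle) (by positivity)

end Sampling

noncomputable def disagreeLoss {α : Type*} (f₀ f : α → Bool) (x : α) : ℝ :=
  if f x ≠ f₀ x then 1 else 0

section DisagreeLoss

variable {α : Type*} (f₀ f : α → Bool)

lemma disagreeLoss_mem_Icc (x : α) : disagreeLoss f₀ f x ∈ Set.Icc (0 : ℝ) 1 := by
  by_cases h : f x = f₀ x <;> simp [disagreeLoss, h]

lemma disagreeLoss_eq_indicator : disagreeLoss f₀ f = {x | f x ≠ f₀ x}.indicator 1 := by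
  funext x
  by_cases h : f x = f₀ x <;> simp [disagreeLoss, h]

lemma empMean_disagreeLoss_eq_zero {n : ℕ} {z : Fin n → α} (h : ∀ i, f (z i) = f₀ (z i)) :
    empMean (disagreeLoss f₀ f) z = 0 := by
  simp [empMean, disagreeLoss, h]

variable [MeasurableSpace α] {μ : Measure α} {f₀ f}

lemma measurableSet_ne_fun (hf₀ : Measurable f₀) (hf : Measurable f) :
    MeasurableSet {x | f x ≠ f₀ x} :=
  (measurableSet_eq_fun hf hf₀).compl

lemma integrable_disagreeLoss [IsFiniteMeasure μ] (hf₀ : Measurable f₀) (hf : Measurable f) :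
    Integrable (disagreeLoss f₀ f) μ := by
  rw [disagreeLoss_eq_indicator]
  exact (integrable_const 1).indicator (measurableSet_ne_fun hf₀ hf)

lemma integral_disagreeLoss (hf₀ : Measurable f₀) (hf : Measurable f) :
    ∫ x, disagreeLoss f₀ f x ∂μ = (μ {x | f x ≠ f₀ x}).toReal := by
  rw [disagreeLoss_eq_indicator, integral_indicator_one (measurableSet_ne_fun hf₀ hf),
    measureReal_def]

end DisagreeLoss

lemma sum_swapCoords_ghostShiftedSup_disagreeLoss_le {X : Type*} [MeasurableSpace X] {n : ℕ}
    (F : Finset (X → Bool)) (hF : F.Nonempty) (f₀ : X → Bool) {c : ℝ} (hc : 0 < c)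
    (q : Fin n → X × X) :
    ∑ ε : Fin n → Bool, ghostShiftedSup F hF (disagreeLoss f₀) (1 + c) (swapCoords ε q) ≤
      2 ^ Fintype.card (Fin n) *
        (2 * (1 + c / 2) ^ 2 / c * Real.log (growthFn (↑F : Set (X → Bool)) n) / n) := by
  have hlog := log_card_image_pair_le hF (Prod.fst ∘ q) (Prod.snd ∘ q) fun u v i =>
    (if v i ≠ f₀ (q i).2 then (1 : ℝ) else 0) - if u i ≠ f₀ (q i).1 then 1 else 0
  calc _ ≤ 2 ^ n * ((n : ℝ)⁻¹ * ((1 + c / 2) ^ 2 / c *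
        Real.log (F.image fun f i =>
          disagreeLoss f₀ f (q i).2 - disagreeLoss f₀ f (q i).1).card)) :=
        sum_swapCoords_ghostShiftedSup_le F hF _ (fun f => disagreeLoss_mem_Icc f₀ f) hc q
    _ ≤ 2 ^ n * ((n : ℝ)⁻¹ * ((1 + c / 2) ^ 2 / c *
        (2 * Real.log (growthFn (↑F : Set (X → Bool)) n)))) := by gcongr; exact hlog
    _ = _ := by rw [Fintype.card_fin]; ring

open Classical in
theorem realizable_erm_bound_general {𝒳 : Type*} [MeasurableSpace 𝒳]
    (μ : Measure 𝒳) [IsProbabilityMeasure μ]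
    (n : ℕ) (hn : 0 < n) (F : Finset (𝒳 → Bool)) (hF : F.Nonempty)
    (hmeas : ∀ f ∈ F, Measurable f)
    (fs : 𝒳 → Bool) (hfsF : fs ∈ F)
    (fhat : (Fin n → 𝒳) → (𝒳 → Bool))
    (hERM_mem : ∀ z, fhat z ∈ F)
    (hERM_fit : ∀ z, ∀ i, fhat z (z i) = fs (z i))
    (c : ℝ) (hc : 0 < c) :
    (∫ z, (μ {x | fhat z x ≠ fs x}).toReal ∂(Measure.pi fun _ : Fin n => μ) ≤
      ∫ z, (F.sup' hF fun f => (μ {x | f x ≠ fs x}).toReal -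
          (1 + c) * ((n : ℝ)⁻¹ * ∑ i, if f (z i) ≠ fs (z i) then (1 : ℝ) else 0))
        ∂(Measure.pi fun _ : Fin n => μ)) ∧
    (∫ z, (F.sup' hF fun f => (μ {x | f x ≠ fs x}).toReal -
          (1 + c) * ((n : ℝ)⁻¹ * ∑ i, if f (z i) ≠ fs (z i) then (1 : ℝ) else 0))
        ∂(Measure.pi fun _ : Fin n => μ) ≤
      (2 * (1 + c / 2) ^ 2 / c) * Real.log (growthFn (↑F : Set (𝒳 → Bool)) n) / n) := by
  have hint : ∀ f ∈ F, Integrable (disagreeLoss fs f) μ := fun f hf =>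
    integrable_disagreeLoss (hmeas fs hfsF) (hmeas f hf)
  refine ⟨integral_mono_of_nonneg (ae_of_all _ fun z => ENNReal.toReal_nonneg)
    (integrable_finset_sup' F hF fun f hf =>
      (integrable_const _).sub ((integrable_empMean (hint f hf)).const_mul (1 + c)))
    (ae_of_all _ fun z => ?_), ?_⟩
  · calc (μ {x | fhat z x ≠ fs x}).toReal
        = (μ {x | fhat z x ≠ fs x}).toReal - (1 + c) * empMean (disagreeLoss fs (fhat z)) z := by
          rw [empMean_disagreeLoss_eq_zero _ _ (hERM_fit z), mul_zero, sub_zero]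
      _ ≤ _ := Finset.le_sup' (fun f => (μ {x | f x ≠ fs x}).toReal -
          (1 + c) * empMean (disagreeLoss fs f) z) (hERM_mem z)
  · calc _ = ∫ z, (F.sup' hF fun f => ∫ x, disagreeLoss fs f x ∂μ -
          (1 + c) * empMean (disagreeLoss fs f) z) ∂(Measure.pi fun _ : Fin n => μ) := by
          congr 1
          funext z
          exact Finset.sup'_congr hF rfl fun f hf => by
            rw [integral_disagreeLoss (hmeas fs hfsF) (hmeas f hf)]; rfl
      _ ≤ ∫ q, ghostShiftedSup F hF (disagreeLoss fs) (1 + c) q ∂(Measure.pi fun _ => μ.prod μ) :=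
          integral_sup'_le_integral_ghostShiftedSup hn.ne' F hF hint (1 + c)
      _ ≤ _ := integral_le_of_sum_swapCoords_le (integrable_ghostShiftedSup F hF hint _)
          (sum_swapCoords_ghostShiftedSup_disagreeLoss_le F hF fs hc)

open Classical in
theorem realizable_erm_bound {𝒳 : Type*} [MeasurableSpace 𝒳]
    (μ : Measure 𝒳) [IsProbabilityMeasure μ]
    (n : ℕ) (hn : 0 < n) (F : Finset (𝒳 → Bool)) (hF : F.Nonempty)
    (hmeas : ∀ f ∈ F, Measurable f)
    (fs : 𝒳 → Bool) (hfsF : fs ∈ F)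
    (fhat : (Fin n → 𝒳) → (𝒳 → Bool))
    (hERM_mem : ∀ z, fhat z ∈ F)
    (hERM_fit : ∀ z, ∀ i, fhat z (z i) = fs (z i))
    (hm : AEStronglyMeasurable (fun z => (μ {x | fhat z x ≠ fs x}).toReal)
      (Measure.pi fun _ : Fin n => μ))
    (c : ℝ) (hc : 0 < c) :
    (∫ z, (μ {x | fhat z x ≠ fs x}).toReal ∂(Measure.pi fun _ : Fin n => μ) ≤
      ∫ z, (F.sup' hF fun f => (μ {x | f x ≠ fs x}).toReal -
          (1 + c) * ((n : ℝ)⁻¹ * ∑ i, if f (z i) ≠ fs (z i) then (1 : ℝ) else 0))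
        ∂(Measure.pi fun _ : Fin n => μ)) ∧
    (∫ z, (F.sup' hF fun f => (μ {x | f x ≠ fs x}).toReal -
          (1 + c) * ((n : ℝ)⁻¹ * ∑ i, if f (z i) ≠ fs (z i) then (1 : ℝ) else 0))
        ∂(Measure.pi fun _ : Fin n => μ) ≤
      (2 * (1 + c / 2) ^ 2 / c) * Real.log (growthFn (↑F : Set (𝒳 → Bool)) n) / n) :=
  realizable_erm_bound_general μ n hn F hF hmeas fs hfsF fhat hERM_mem hERM_fit c hc
end
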